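/- arXiv:1412.1338 — 6 statements merged into one kernel-verified Lean document; each statement's English description precedes it below -/
import Mathlib

section
/- Let H_s be a Hermitian d×d complex matrix with orthonormal eigenbasis {|E_j⟩} and real eigenvalues {E_j}, let V be a unitary d×d matrix, let p₀ ∈ ℝ, and define U_s(p) = Σ_{n,j} exp(−i(p − p₀)(E_j − E_n)) ⟨E_n|V|E_j⟩ |E_n⟩⟨E_j|. Let ρ_s be a density matrix on ℂ^d and let μ_w : ℝ → [0,∞) be an integrable probability density with first moment p₀ = ∫_ℝ p·μ_w(p) dp. Then for every ε > 0 there exists δ > 0 such that ‖ (1/δ) ∫_ℝ μ_w((p − p₀)/δ + p₀) · U_s(p) ρ_s U_s(p)† dp − V ρ_s V† ‖₁ ≤ ε. (That is, by making the momentum distribution of the weight sufficiently narrow around p₀, the unitary V is implemented on the system to arbitrary trace-distance accuracy.) -/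
open MeasureTheory Matrix
open scoped ComplexOrder

attribute [local instance] Matrix.frobeniusNormedAddCommGroup Matrix.frobeniusNormedSpace

/-- A density matrix: positive semidefinite with trace one. -/
def IsDensityMatrix {n : Type*} [Fintype n] [DecidableEq n] (ρ : Matrix n n ℂ) : Prop :=
  ρ.PosSemidef ∧ ρ.trace = 1

/-- The trace norm `‖A‖₁ = Tr √(Aᴴ A)`. -/
noncomputable def traceNorm {n : Type*} [Fintype n] [DecidableEq n] (A : Matrix n n ℂ) : ℝ :=
  (((Matrix.posSemidef_conjTranspose_mul_self A).1.eigenvectorUnitary : Matrix n n ℂ) *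
    diagonal (fun i => ((Real.sqrt ((Matrix.posSemidef_conjTranspose_mul_self A).1.eigenvalues i) : ℝ) : ℂ)) *
    (star (Matrix.posSemidef_conjTranspose_mul_self A).1.eigenvectorUnitary : Matrix n n ℂ)).trace.re


lemma traceNorm_le_card_mul_norm {n : Type*} [Fintype n] [DecidableEq n] (A : Matrix n n ℂ) :
    traceNorm A ≤ (Fintype.card n : ℝ) * ‖A‖ := by
  classical
  set hS := Matrix.posSemidef_conjTranspose_mul_self A with hhS
  set B := ((hS.1.eigenvectorUnitary : Matrix n n ℂ) *
    diagonal (fun i => ((Real.sqrt (hS.1.eigenvalues i) : ℝ) : ℂ)) *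
    (star hS.1.eigenvectorUnitary : Matrix n n ℂ)) with hB
  have hBherm : B.IsHermitian := by
    rw [hB, IsHermitian, conjTranspose_mul, conjTranspose_mul, diagonal_conjTranspose, mul_assoc]
    have hs : (star fun i => ((Real.sqrt (hS.1.eigenvalues i) : ℝ) : ℂ)) =
        fun i => ((Real.sqrt (hS.1.eigenvalues i) : ℝ) : ℂ) :=
      funext fun i => Complex.conj_ofReal _
    rw [hs]
    simp [star_eq_conjTranspose]
  have hBB : B * B = Aᴴ * A := by
    have hU : (star hS.1.eigenvectorUnitary : Matrix n n ℂ) * (hS.1.eigenvectorUnitary : Matrix n n ℂ) = 1 :=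
      Unitary.coe_star_mul_self _
    conv_rhs => rw [hS.1.spectral_theorem, Unitary.conjStarAlgAut_apply]
    rw [hB]
    have hD : diagonal (fun i => ((Real.sqrt (hS.1.eigenvalues i) : ℝ) : ℂ)) * diagonal (fun i => ((Real.sqrt (hS.1.eigenvalues i) : ℝ) : ℂ)) = diagonal (RCLike.ofReal ∘ hS.1.eigenvalues) := by
      rw [diagonal_mul_diagonal]
      congr 1; funext i
      simp only [Function.comp_apply]
      rw [← Complex.ofReal_mul, Real.mul_self_sqrt (hS.eigenvalues_nonneg i)]
      rfl
    rw [← hD]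
    simp only [mul_assoc]
    rw [← mul_assoc (star _ : Matrix n n ℂ) (hS.1.eigenvectorUnitary : Matrix n n ℂ), hU, one_mul]
  have hA2 : ‖A‖ ^ 2 = ∑ k, ∑ l, ‖A k l‖ ^ 2 := by
    rw [Matrix.frobenius_norm_def]
    rw [← Real.rpow_natCast ((∑ k, ∑ l, ‖A k l‖ ^ (2:ℝ)) ^ (1/2:ℝ)) 2,
      ← Real.rpow_mul (by positivity)]
    norm_num
  have key : ∀ i, (B i i).re ≤ ‖A‖ := by
    intro i
    have h1 : ((B i i).re) ^ 2 ≤ Complex.normSq (B i i) := by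
      rw [Complex.normSq_apply]; nlinarith [sq_nonneg (B i i).im]
    have h2 : Complex.normSq (B i i) ≤ ∑ k, Complex.normSq (B i k) := by
      exact Finset.single_le_sum (fun k _ => Complex.normSq_nonneg _) (Finset.mem_univ i)
    have h3 : ∑ k, Complex.normSq (B i k) = ((Aᴴ * A) i i).re := by
      rw [← hBB, Matrix.mul_apply, Complex.re_sum]
      refine Finset.sum_congr rfl fun k _ => ?_
      rw [← hBherm.apply i k]
      simp [Complex.star_def, Complex.mul_conj, Complex.normSq_apply]
    have h4 : ((Aᴴ * A) i i).re = ∑ k, ‖A k i‖ ^ 2 := by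
      rw [Matrix.mul_apply, Complex.re_sum]
      refine Finset.sum_congr rfl fun k _ => ?_
      rw [Matrix.conjTranspose_apply, Complex.star_def, mul_comm, Complex.mul_conj]
      rw [Complex.ofReal_re, Complex.normSq_eq_norm_sq]
    have h5 : ∑ k, ‖A k i‖ ^ 2 ≤ ‖A‖ ^ 2 := by
      rw [hA2]
      calc ∑ k, ‖A k i‖ ^ 2 ≤ ∑ k, ∑ l, ‖A k l‖ ^ 2 :=
        Finset.sum_le_sum fun k _ => Finset.single_le_sum (f := fun l => ‖A k l‖ ^ 2) (fun l _ => sq_nonneg _) (Finset.mem_univ i)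
      _ = _ := rfl
    nlinarith [norm_nonneg A]
  calc traceNorm A = ∑ i, (B i i).re := by
        rw [traceNorm, Matrix.trace, Complex.re_sum]; rfl
    _ ≤ ∑ _i : n, ‖A‖ := Finset.sum_le_sum fun i _ => key i
    _ = (Fintype.card n : ℝ) * ‖A‖ := by rw [Finset.sum_const, nsmul_eq_mul, Fintype.card]

lemma exp_ito_sub_one_abs_le (t s : ℝ) :
    ‖Complex.exp (-Complex.I * (t:ℂ) * (s:ℂ)) - 1‖ ≤ 2 * (|t| * |s|) := by
  have habs : ‖-Complex.I * (t:ℂ) * (s:ℂ)‖ = |t| * |s| := by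
    simp [Complex.norm_real]
  by_cases h : ‖-Complex.I * (t:ℂ) * (s:ℂ)‖ ≤ 1
  · have := Complex.norm_exp_sub_one_le h
    rw [habs] at this; linarith
  · have h1 : ‖Complex.exp (-Complex.I * (t:ℂ) * (s:ℂ))‖ = 1 := by
      rw [Complex.norm_exp]
      have : (-Complex.I * (t:ℂ) * (s:ℂ)).re = 0 := by simp
      rw [this, Real.exp_zero]
    calc ‖Complex.exp (-Complex.I * (t:ℂ) * (s:ℂ)) - 1‖
        ≤ ‖Complex.exp (-Complex.I * (t:ℂ) * (s:ℂ))‖ + ‖(1:ℂ)‖ :=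
          norm_sub_le _ _
      _ = 2 := by rw [h1]; norm_num
      _ ≤ 2 * (|t| * |s|) := by
          rw [habs] at h; push_neg at h; nlinarith

lemma sum_dotProduct_smul_vecMulVec {d : ℕ} (v : Fin d → Fin d → ℂ)
    (hortho : ∀ i j, star (v i) ⬝ᵥ v j = if i = j then (1:ℂ) else 0)
    (V : Matrix (Fin d) (Fin d) ℂ) :
    ∑ n, ∑ j, (star (v n) ⬝ᵥ V *ᵥ v j) • Matrix.vecMulVec (v n) (star (v j)) = V := by
  classical
  set W : Matrix (Fin d) (Fin d) ℂ := Matrix.of (fun i j => v j i) with hW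
  have hWW : Wᴴ * W = 1 := by
    ext i j
    have := hortho i j
    simpa [Matrix.mul_apply, Matrix.conjTranspose_apply, Matrix.one_apply, dotProduct, hW] using this
  have hWW' : W * Wᴴ = 1 := mul_eq_one_comm.mp hWW
  have hrep : ∀ A : Matrix (Fin d) (Fin d) ℂ,
      W * A * Wᴴ = ∑ n, ∑ j, A n j • Matrix.vecMulVec (v n) (star (v j)) := by
    intro A; ext i k
    simp only [Matrix.mul_apply, Matrix.sum_apply, Matrix.smul_apply, Matrix.vecMulVec_apply,
      Matrix.conjTranspose_apply, Matrix.of_apply, hW, smul_eq_mul, Finset.sum_mul,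
      Finset.mul_sum, Pi.star_apply]
    rw [Finset.sum_comm]
    refine Finset.sum_congr rfl fun n _ => Finset.sum_congr rfl fun j _ => by ring
  have hmid : (Wᴴ * V * W) = Matrix.of (fun n j => star (v n) ⬝ᵥ V *ᵥ v j) := by
    ext n j
    simp only [Matrix.mul_apply, Matrix.conjTranspose_apply, Matrix.of_apply, hW,
      dotProduct, Matrix.mulVec, Finset.sum_mul, Finset.mul_sum, Pi.star_apply]
    rw [Finset.sum_comm]
    refine Finset.sum_congr rfl fun a _ => Finset.sum_congr rfl fun b _ => by ring
  calc ∑ n, ∑ j, (star (v n) ⬝ᵥ V *ᵥ v j) • Matrix.vecMulVec (v n) (star (v j))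
      = W * (Wᴴ * V * W) * Wᴴ := by
        rw [hrep, hmid]; rfl
    _ = V := by
        rw [show W * (Wᴴ * V * W) * Wᴴ = (W * Wᴴ) * V * (W * Wᴴ) by noncomm_ring, hWW']
        simp

set_option maxHeartbeats 1000000 in
/-- by making the momentum distribution of the weight sufficiently narrow
around its mean `p₀`, the unitary `V` is implemented on the system state `ρ_s` to arbitrary
trace-distance accuracy by the energy-conserving unitaries
`U_s(p) = Σ_{n,j} exp(−i(p−p₀)(E_j−E_n)) ⟨E_n|V|E_j⟩ |E_n⟩⟨E_j|`. -/
theorem weight_implements_unitary_to_arbitrary_accuracy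
    {d : ℕ} (Hs : Matrix (Fin d) (Fin d) ℂ) (hHs : Hs.IsHermitian)
    (v : Fin d → Fin d → ℂ) (E : Fin d → ℝ)
    (hortho : ∀ i j, star (v i) ⬝ᵥ v j = if i = j then (1 : ℂ) else 0)
    (heig : ∀ j, Hs *ᵥ v j = (E j : ℂ) • v j)
    (V : Matrix (Fin d) (Fin d) ℂ) (hV : V ∈ Matrix.unitaryGroup (Fin d) ℂ)
    (p₀ : ℝ)
    (Us : ℝ → Matrix (Fin d) (Fin d) ℂ)
    (hUs : ∀ p : ℝ, Us p = ∑ n, ∑ j,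
      (Complex.exp (-Complex.I * ((p : ℂ) - (p₀ : ℂ)) * ((E j : ℂ) - (E n : ℂ))) *
        (star (v n) ⬝ᵥ V *ᵥ v j)) • Matrix.vecMulVec (v n) (star (v j)))
    (ρs : Matrix (Fin d) (Fin d) ℂ) (hρs : IsDensityMatrix ρs)
    (μw : ℝ → ℝ) (hμw_nonneg : ∀ p, 0 ≤ μw p)
    (hμw_int : Integrable μw)
    (hμw_norm : ∫ p, μw p = 1)
    (hmom_int : Integrable (fun p => p * μw p))
    (hp₀ : p₀ = ∫ p, p * μw p)
    (ε : ℝ) (hε : 0 < ε) :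
    ∃ δ > (0 : ℝ),
      traceNorm ((1 / δ) • (∫ p, μw ((p - p₀) / δ + p₀) • (Us p * ρs * (Us p)ᴴ))
        - V * ρs * Vᴴ) ≤ ε := by
  classical
  -- abbreviations
  set c : Fin d → Fin d → ℂ := fun n j => star (v n) ⬝ᵥ V *ᵥ v j with hc
  set MM : Fin d → Fin d → Matrix (Fin d) (Fin d) ℂ :=
    fun n j => Matrix.vecMulVec (v n) (star (v j)) with hMM
  have hVsum : V = ∑ n, ∑ j, c n j • MM n j :=
    (sum_dotProduct_smul_vecMulVec v hortho V).symm
  have hUs' : ∀ p : ℝ, Us p = ∑ n, ∑ j,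
      (Complex.exp (-Complex.I * ((p : ℂ) - (p₀ : ℂ)) * ((E j : ℂ) - (E n : ℂ))) * c n j) • MM n j :=
    hUs
  set C₂ : ℝ := ∑ n, ∑ j, ‖c n j‖ * ‖MM n j‖ with hC₂
  set K₁ : ℝ := ∑ n, ∑ j, 2 * |E j - E n| * (‖c n j‖ * ‖MM n j‖) with hK₁
  have hC₂0 : 0 ≤ C₂ := by
    apply Finset.sum_nonneg; intro n _; apply Finset.sum_nonneg; intro j _; positivity
  have hK₁0 : 0 ≤ K₁ := by
    apply Finset.sum_nonneg; intro n _; apply Finset.sum_nonneg; intro j _; positivity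
  -- norm of exponentials
  have habs1 : ∀ (p : ℝ) (n j : Fin d),
      ‖Complex.exp (-Complex.I * ((p : ℂ) - (p₀ : ℂ)) * ((E j : ℂ) - (E n : ℂ)))‖ = 1 := by
    intro p n j
    rw [Complex.norm_exp]
    have : (-Complex.I * ((p : ℂ) - (p₀ : ℂ)) * ((E j : ℂ) - (E n : ℂ))).re = 0 := by
      push_cast
      simp [Complex.mul_re, Complex.mul_im]
    rw [this, Real.exp_zero]
  -- uniform norm bound on Us
  have hUsnorm : ∀ p, ‖Us p‖ ≤ C₂ := by
    intro p
    rw [hUs' p]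
    refine (norm_sum_le _ _).trans ?_
    rw [hC₂]
    refine Finset.sum_le_sum fun n _ => ?_
    refine (norm_sum_le _ _).trans ?_
    refine Finset.sum_le_sum fun j _ => ?_
    rw [norm_smul, norm_mul, habs1, one_mul]
  -- Us p₀ = V
  have hUsp₀ : Us p₀ = V := by
    rw [hUs' p₀]
    have h1 : (∑ n, ∑ j,
        (Complex.exp (-Complex.I * ((p₀ : ℂ) - (p₀ : ℂ)) * ((E j : ℂ) - (E n : ℂ))) * c n j) • MM n j)
        = ∑ n, ∑ j, c n j • MM n j := by
      refine Finset.sum_congr rfl fun n _ => Finset.sum_congr rfl fun j _ => ?_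
      rw [sub_self, mul_zero, zero_mul, Complex.exp_zero, one_mul]
    rw [h1]; exact hVsum.symm
  -- Lipschitz bound on Us
  have hUslip : ∀ p, ‖Us p - V‖ ≤ |p - p₀| * K₁ := by
    intro p
    have hdiff : Us p - V = ∑ n, ∑ j,
        ((Complex.exp (-Complex.I * ((p : ℂ) - (p₀ : ℂ)) * ((E j : ℂ) - (E n : ℂ))) - 1) * c n j)
          • MM n j := by
      rw [hUs' p]
      conv_lhs => rw [hVsum]
      rw [← Finset.sum_sub_distrib]
      refine Finset.sum_congr rfl fun n _ => ?_
      rw [← Finset.sum_sub_distrib]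
      refine Finset.sum_congr rfl fun j _ => ?_
      rw [← sub_smul, sub_mul, one_mul]
    rw [hdiff, hK₁, Finset.mul_sum]
    refine (norm_sum_le _ _).trans (Finset.sum_le_sum fun n _ => ?_)
    rw [Finset.mul_sum]
    refine (norm_sum_le _ _).trans (Finset.sum_le_sum fun j _ => ?_)
    rw [norm_smul, norm_mul]
    have hexp : ‖
        (Complex.exp (-Complex.I * ((p : ℂ) - (p₀ : ℂ)) * ((E j : ℂ) - (E n : ℂ))) - 1)‖
        ≤ 2 * (|p - p₀| * |E j - E n|) := by
      have := exp_ito_sub_one_abs_le (p - p₀) (E j - E n)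
      push_cast at this ⊢
      exact this
    calc ‖Complex.exp (-Complex.I * ((p : ℂ) - (p₀ : ℂ)) * ((E j : ℂ) - (E n : ℂ))) - 1‖
          * ‖c n j‖ * ‖MM n j‖
        ≤ (2 * (|p - p₀| * |E j - E n|)) * ‖c n j‖ * ‖MM n j‖ :=
          mul_le_mul_of_nonneg_right
            (mul_le_mul_of_nonneg_right hexp (norm_nonneg _)) (norm_nonneg _)
      _ = |p - p₀| * (2 * |E j - E n| * (‖c n j‖ * ‖MM n j‖)) := by ring
  -- the system evolution
  set f : ℝ → Matrix (Fin d) (Fin d) ℂ := fun p => Us p * ρs * (Us p)ᴴ with hf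
  set f₀ : Matrix (Fin d) (Fin d) ℂ := V * ρs * Vᴴ with hf₀
  have hVnorm : ‖V‖ ≤ C₂ := hUsp₀ ▸ hUsnorm p₀
  set B : ℝ := C₂ * ‖ρs‖ * C₂ with hB
  have hB0 : 0 ≤ B := by positivity
  have hfB : ∀ p, ‖f p‖ ≤ B := by
    intro p
    show ‖Us p * ρs * (Us p)ᴴ‖ ≤ C₂ * ‖ρs‖ * C₂
    calc ‖Us p * ρs * (Us p)ᴴ‖ ≤ ‖Us p * ρs‖ * ‖(Us p)ᴴ‖ := Matrix.frobenius_norm_mul _ _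
      _ ≤ (‖Us p‖ * ‖ρs‖) * ‖(Us p)ᴴ‖ :=
          mul_le_mul_of_nonneg_right (Matrix.frobenius_norm_mul _ _) (norm_nonneg _)
      _ = (‖Us p‖ * ‖ρs‖) * ‖Us p‖ := by rw [Matrix.frobenius_norm_conjTranspose]
      _ ≤ (C₂ * ‖ρs‖) * C₂ :=
          mul_le_mul (mul_le_mul_of_nonneg_right (hUsnorm p) (norm_nonneg _)) (hUsnorm p)
            (norm_nonneg _) (by positivity)
  set K : ℝ := K₁ * ‖ρs‖ * C₂ + C₂ * ‖ρs‖ * K₁ with hK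
  have hK0 : 0 ≤ K := by positivity
  clear_value B
  have hflip : ∀ p, ‖f p - f₀‖ ≤ |p - p₀| * K := by
    intro p
    have hdec : f p - f₀ = (Us p - V) * (ρs * (Us p)ᴴ) + (V * ρs) * ((Us p - V)ᴴ) := by
      rw [hf, hf₀]
      simp only [Matrix.conjTranspose_sub]
      noncomm_ring
    rw [hdec]
    have e1 : ‖(Us p - V) * (ρs * (Us p)ᴴ)‖ ≤ (|p - p₀| * K₁) * (‖ρs‖ * C₂) := by
      refine (Matrix.frobenius_norm_mul _ _).trans ?_
      have h1 : ‖ρs * (Us p)ᴴ‖ ≤ ‖ρs‖ * C₂ := by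
        refine (Matrix.frobenius_norm_mul _ _).trans ?_
        rw [Matrix.frobenius_norm_conjTranspose]
        exact mul_le_mul_of_nonneg_left (hUsnorm p) (norm_nonneg _)
      exact mul_le_mul (hUslip p) h1 (norm_nonneg _)
        (mul_nonneg (abs_nonneg _) hK₁0)
    have e2 : ‖(V * ρs) * ((Us p - V)ᴴ)‖ ≤ (C₂ * ‖ρs‖) * (|p - p₀| * K₁) := by
      refine (Matrix.frobenius_norm_mul _ _).trans ?_
      rw [Matrix.frobenius_norm_conjTranspose]
      have h1 : ‖V * ρs‖ ≤ C₂ * ‖ρs‖ := by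
        refine (Matrix.frobenius_norm_mul _ _).trans ?_
        exact mul_le_mul_of_nonneg_right hVnorm (norm_nonneg _)
      exact mul_le_mul h1 (hUslip p) (norm_nonneg _)
        (mul_nonneg hC₂0 (norm_nonneg _))
    calc ‖(Us p - V) * (ρs * (Us p)ᴴ) + (V * ρs) * ((Us p - V)ᴴ)‖
        ≤ ‖(Us p - V) * (ρs * (Us p)ᴴ)‖ + ‖(V * ρs) * ((Us p - V)ᴴ)‖ := norm_add_le _ _
      _ ≤ (|p - p₀| * K₁) * (‖ρs‖ * C₂) + (C₂ * ‖ρs‖) * (|p - p₀| * K₁) := add_le_add e1 e2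
      _ = |p - p₀| * K := by rw [hK]; ring
  clear_value K
  -- continuity
  have hUscont : Continuous Us := by
    have heq : Us = fun p : ℝ => ∑ n, ∑ j,
      (Complex.exp (-Complex.I * ((p : ℂ) - (p₀ : ℂ)) * ((E j : ℂ) - (E n : ℂ))) *
        c n j) • MM n j := funext hUs'
    rw [heq]
    refine continuous_finset_sum _ fun n _ => continuous_finset_sum _ fun j _ => ?_
    refine Continuous.smul (f := fun p : ℝ => Complex.exp (-Complex.I * ((p : ℂ) - (p₀ : ℂ)) * ((E j : ℂ) - (E n : ℂ))) * c n j) (g := fun _ => MM n j) ?_ continuous_const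
    exact (Complex.continuous_exp.comp (by fun_prop)).mul continuous_const
  have hfcont : Continuous f := by
    exact (hUscont.matrix_mul continuous_const).matrix_mul hUscont.matrix_conjTranspose
  -- the absolute-moment function
  set m : ℝ → ℝ := fun x => μw x * |x - p₀| with hm
  have hm_int : Integrable m := by
    refine Integrable.mono ((hmom_int.abs).add ((hμw_int.abs).const_mul |p₀|))
      (hμw_int.aestronglyMeasurable.mul
        ((continuous_abs.comp (continuous_id.sub continuous_const)).aestronglyMeasurable))
      (ae_of_all _ fun x => ?_)
    have h1 : |x - p₀| ≤ |x| + |p₀| := abs_sub x p₀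
    have h2 : 0 ≤ μw x := hμw_nonneg x
    rw [Real.norm_eq_abs, Real.norm_eq_abs, abs_of_nonneg (by positivity : (0:ℝ) ≤ μw x * |x - p₀|)]
    have h3 : |x * μw x| = |x| * μw x := by rw [abs_mul, abs_of_nonneg h2]
    have h4 : |μw x| = μw x := abs_of_nonneg h2
    calc μw x * |x - p₀| ≤ μw x * (|x| + |p₀|) := by nlinarith
      _ = |x * μw x| + |p₀| * |μw x| := by rw [h3, h4]; ring
      _ ≤ |(|x * μw x| + |p₀| * |μw x|)| := le_abs_self _
  set M₀ : ℝ := ∫ x, m x with hM₀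
  have hM₀0 : 0 ≤ M₀ :=
    integral_nonneg fun x => mul_nonneg (hμw_nonneg x) (abs_nonneg _)
  clear_value M₀
  -- choice of δ
  set a : ℝ := (d : ℝ) * K * M₀ with ha
  have ha0 : 0 ≤ a := by positivity
  clear_value a
  set δ : ℝ := ε / (a + 1) with hδ
  have hδ0 : 0 < δ := by positivity
  have hδne : δ ≠ 0 := ne_of_gt hδ0
  clear_value δ
  refine ⟨δ, hδ0, ?_⟩
  set g : ℝ → ℝ := fun p => μw ((p - p₀) / δ + p₀) with hg
  have hg_nonneg : ∀ p, 0 ≤ g p := fun p => hμw_nonneg _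
  have hg_int : Integrable g :=
    ((hμw_int.comp_add_right p₀).comp_div hδne).comp_sub_right p₀
  have hg_norm : ∫ p, g p = δ := by
    calc ∫ p, g p = ∫ x, μw (x / δ + p₀) :=
          integral_sub_right_eq_self (fun x => μw (x / δ + p₀)) p₀
      _ = |δ| • ∫ y, μw (y + p₀) := Measure.integral_comp_div (fun y => μw (y + p₀)) δ
      _ = δ := by
          rw [integral_add_right_eq_self μw p₀, hμw_norm, smul_eq_mul, mul_one,
            abs_of_pos hδ0]
  have hgm_int : Integrable (fun p => g p * |p - p₀|) := by
    have h1 : Integrable (fun p => m ((p - p₀) / δ + p₀)) :=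
      ((hm_int.comp_add_right p₀).comp_div hδne).comp_sub_right p₀
    have h2 : (fun p => δ * m ((p - p₀) / δ + p₀)) = fun p => g p * |p - p₀| := by
      funext p
      rw [hm, hg]
      simp only [add_sub_cancel_right]
      rw [show |(p - p₀) / δ| = |p - p₀| / δ by rw [abs_div, abs_of_pos hδ0]]
      field_simp
    rw [← h2]
    exact h1.const_mul δ
  have hgm : ∫ p, g p * |p - p₀| = δ ^ 2 * M₀ := by
    have step1 : ∫ p, g p * |p - p₀| = ∫ x, μw (x / δ + p₀) * |x| := by
      exact integral_sub_right_eq_self (fun x => μw (x / δ + p₀) * |x|) p₀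
    have hfun : (fun x => μw (x / δ + p₀) * |x|)
        = fun x => (fun y => |δ| * (μw (y + p₀) * |y|)) (x / δ) := by
      funext x
      show μw (x / δ + p₀) * |x| = |δ| * (μw (x / δ + p₀) * |x / δ|)
      rw [show |x / δ| = |x| / δ by rw [abs_div, abs_of_pos hδ0], abs_of_pos hδ0]
      field_simp
    have step2 : ∫ x, μw (x / δ + p₀) * |x| = |δ| • ∫ y, |δ| * (μw (y + p₀) * |y|) := by
      rw [hfun]
      exact Measure.integral_comp_div (fun y => |δ| * (μw (y + p₀) * |y|)) δ
    have step3 : ∫ y, |δ| * (μw (y + p₀) * |y|) = |δ| * M₀ := by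
      rw [integral_const_mul]
      congr 1
      calc ∫ y, μw (y + p₀) * |y| = ∫ y, m (y + p₀) := by
            refine integral_congr_ae (ae_of_all _ fun y => ?_)
            rw [hm]; simp
        _ = M₀ := by rw [integral_add_right_eq_self m p₀, hM₀]
    rw [step1, step2, step3, smul_eq_mul, abs_of_pos hδ0]
    ring
  -- integrability of the matrix-valued integrands
  letI : ContinuousENorm (Matrix (Fin d) (Fin d) ℂ) :=
    @SeminormedAddGroup.toContinuousENorm _ Matrix.frobeniusSeminormedAddCommGroup.toSeminormedAddGroup
  letI : TopologicalSpace.PseudoMetrizableSpace (Matrix (Fin d) (Fin d) ℂ) :=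
    @PseudoEMetricSpace.pseudoMetrizableSpace _ Matrix.frobeniusSeminormedAddCommGroup.toPseudoMetricSpace.toPseudoEMetricSpace
  have hI1 : Integrable (fun p => g p • f p) := by
    refine Integrable.mono (hg_int.const_mul B)
      (hg_int.aestronglyMeasurable.smul hfcont.aestronglyMeasurable)
      (ae_of_all _ fun p => ?_)
    rw [norm_smul, Real.norm_eq_abs, abs_of_nonneg (hg_nonneg p), Real.norm_eq_abs]
    calc g p * ‖f p‖ ≤ g p * B := by nlinarith [hfB p, hg_nonneg p]
      _ = B * g p := by ring
      _ ≤ |B * g p| := le_abs_self _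
  have hI2 : Integrable (fun p => g p • f₀) := hg_int.smul_const f₀
  -- main computation
  have hXeq : (1 / δ) • (∫ p, g p • f p) - f₀ = (1 / δ) • ∫ p, g p • (f p - f₀) := by
    have h1 : ∫ p, g p • (f p - f₀) = (∫ p, g p • f p) - δ • f₀ := by
      simp_rw [smul_sub]
      rw [integral_sub hI1 hI2, integral_smul_const, hg_norm]
    rw [h1, smul_sub, smul_smul, one_div, inv_mul_cancel₀ hδne, one_smul]
  have hI3 : Integrable (fun p => g p • (f p - f₀)) := by
    refine (hI1.sub hI2).congr (ae_of_all _ fun p => ?_)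
    simp [smul_sub]
  have hnormX : ‖(1 / δ) • (∫ p, g p • f p) - f₀‖ ≤ K * M₀ * δ := by
    have hb : ∀ p, ‖g p • (f p - f₀)‖ ≤ K * (g p * |p - p₀|) := by
      intro p
      rw [norm_smul, Real.norm_eq_abs, abs_of_nonneg (hg_nonneg p)]
      calc g p * ‖f p - f₀‖ ≤ g p * (|p - p₀| * K) := by nlinarith [hflip p, hg_nonneg p]
        _ = K * (g p * |p - p₀|) := by ring
    have h2 : ‖∫ p, g p • (f p - f₀)‖ ≤ K * (δ ^ 2 * M₀) := by
      calc ‖∫ p, g p • (f p - f₀)‖ ≤ ∫ p, ‖g p • (f p - f₀)‖ :=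
            norm_integral_le_integral_norm _
        _ ≤ ∫ p, K * (g p * |p - p₀|) :=
            integral_mono hI3.norm (hgm_int.const_mul K) hb
        _ = K * (δ ^ 2 * M₀) := by rw [integral_const_mul, hgm]
    rw [hXeq, norm_smul, Real.norm_eq_abs, abs_of_pos (by positivity : (0:ℝ) < 1/δ)]
    calc (1 / δ) * ‖∫ p, g p • (f p - f₀)‖ ≤ (1 / δ) * (K * (δ ^ 2 * M₀)) :=
          mul_le_mul_of_nonneg_left h2 (by positivity)
      _ = K * M₀ * δ := by field_simp
  -- conclude
  calc traceNorm ((1 / δ) • (∫ p, g p • f p) - f₀)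
      ≤ (Fintype.card (Fin d) : ℝ) * ‖(1 / δ) • (∫ p, g p • f p) - f₀‖ :=
        traceNorm_le_card_mul_norm _
    _ ≤ (d : ℝ) * (K * M₀ * δ) := by
        rw [Fintype.card_fin]
        nlinarith [hnormX, norm_nonneg ((1 / δ) • (∫ p, g p • f p) - f₀), Nat.cast_nonneg (α := ℝ) d]
    _ = a * (ε / (a + 1)) := by rw [hδ, ha]; ring
    _ ≤ ε := by
        rw [div_eq_mul_inv]
        have h1 : a * (ε * (a + 1)⁻¹) = ε * (a * (a + 1)⁻¹) := by ring
        rw [h1]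
        have h2 : a * (a + 1)⁻¹ ≤ 1 := by
          rw [← div_eq_mul_inv, div_le_one (by linarith)]
          linarith
        nlinarith
end

section
/- Let H_s be a Hermitian d×d complex matrix with orthonormal eigenbasis {|E_j⟩} and real eigenvalues {E_j}, let π be a permutation of {1,…,d}, and let V be the unitary with V|E_j⟩ = |E_{π(j)}⟩ for all j. Let p₀ ∈ ℝ and define U_s(p) = Σ_{n,j} exp(−i(p − p₀)(E_j − E_n)) ⟨E_n|V|E_j⟩ |E_n⟩⟨E_j|. Let ρ_s = Σ_n q_n |E_n⟩⟨E_n| be any density matrix diagonal in the eigenbasis of H_s. Then for EVERY probability measure μ on ℝ, ∫_ℝ U_s(p) ρ_s U_s(p)† dμ(p) = V ρ_s V†. (Permutations of energy levels applied to energy-diagonal states are implemented exactly, regardless of the state of the weight.) -/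
open MeasureTheory Matrix

attribute [local instance] Matrix.frobeniusNormedAddCommGroup Matrix.frobeniusNormedSpace

lemma aux_vecMulVec_mul_vecMulVec {d : ℕ} (a b c e : Fin d → ℂ) :
    vecMulVec a b * vecMulVec c e = (b ⬝ᵥ c) • vecMulVec a e := by
  ext i j
  simp only [mul_apply, vecMulVec_apply, Matrix.smul_apply, dotProduct, smul_eq_mul,
    Finset.sum_mul]
  apply Finset.sum_congr rfl; intros; ring

lemma aux_mul_vecMulVec {d : ℕ} (M : Matrix (Fin d) (Fin d) ℂ) (a b : Fin d → ℂ) :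
    M * vecMulVec a b = vecMulVec (M *ᵥ a) b := by
  ext i j
  simp only [mul_apply, vecMulVec_apply, mulVec, dotProduct, Finset.sum_mul]
  apply Finset.sum_congr rfl; intros; ring

lemma aux_vecMulVec_mul_conjTranspose {d : ℕ} (M : Matrix (Fin d) (Fin d) ℂ) (a x : Fin d → ℂ) :
    vecMulVec a (star x) * Mᴴ = vecMulVec a (star (M *ᵥ x)) := by
  ext i j
  simp only [mul_apply, vecMulVec_apply, conjTranspose_apply, mulVec, dotProduct,
    Pi.star_apply, star_sum, star_mul', Finset.mul_sum]
  apply Finset.sum_congr rfl; intros; ring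

lemma aux_conjTranspose_vecMulVec {d : ℕ} (a b : Fin d → ℂ) :
    (vecMulVec a b)ᴴ = vecMulVec (star b) (star a) := by
  ext i j
  simp [vecMulVec_apply, conjTranspose_apply, mul_comm]

/-- if `V` permutes the energy eigenstates of `H_s` and `ρ_s` is diagonal in
the energy eigenbasis, then the mixture `∫ U_s(p) ρ_s U_s(p)† dμ(p)` equals `V ρ_s V†` exactly,
for every probability measure `μ` (i.e. regardless of the state of the weight). -/
theorem permutation_of_energy_levels_exact
    {d : ℕ} (Hs : Matrix (Fin d) (Fin d) ℂ) (hHs : Hs.IsHermitian)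
    (v : Fin d → Fin d → ℂ) (E : Fin d → ℝ)
    (hortho : ∀ i j, star (v i) ⬝ᵥ v j = if i = j then (1 : ℂ) else 0)
    (heig : ∀ j, Hs *ᵥ v j = (E j : ℂ) • v j)
    (π : Equiv.Perm (Fin d))
    (V : Matrix (Fin d) (Fin d) ℂ) (hV : V ∈ Matrix.unitaryGroup (Fin d) ℂ)
    (hVperm : ∀ j, V *ᵥ v j = v (π j))
    (p₀ : ℝ)
    (Us : ℝ → Matrix (Fin d) (Fin d) ℂ)
    (hUs : ∀ p : ℝ, Us p = ∑ n, ∑ j,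
      (Complex.exp (-Complex.I * ((p : ℂ) - (p₀ : ℂ)) * ((E j : ℂ) - (E n : ℂ))) *
        (star (v n) ⬝ᵥ V *ᵥ v j)) • Matrix.vecMulVec (v n) (star (v j)))
    (q : Fin d → ℝ) (hq_nonneg : ∀ n, 0 ≤ q n) (hq_sum : ∑ n, q n = 1)
    (ρs : Matrix (Fin d) (Fin d) ℂ)
    (hρs : ρs = ∑ n, (q n : ℂ) • Matrix.vecMulVec (v n) (star (v n))) :
    ∀ μ : Measure ℝ, IsProbabilityMeasure μ →
      ∫ p, Us p * ρs * (Us p)ᴴ ∂μ = V * ρs * Vᴴ := by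
  intro μ hμ
  set e : ℝ → Fin d → ℂ := fun p j =>
    Complex.exp (-Complex.I * ((p : ℂ) - (p₀ : ℂ)) * ((E j : ℂ) - (E (π j) : ℂ))) with he
  have hc : ∀ n j, star (v n) ⬝ᵥ V *ᵥ v j = if n = π j then (1 : ℂ) else 0 := by
    intro n j; rw [hVperm, hortho]
  have hUs' : ∀ p, Us p = ∑ j, e p j • Matrix.vecMulVec (v (π j)) (star (v j)) := by
    intro p
    rw [hUs, Finset.sum_comm]
    refine Finset.sum_congr rfl fun j _ => ?_
    rw [Finset.sum_eq_single (π j)]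
    · rw [hc]; simp [he]
    · intro n _ hn; rw [hc, if_neg hn, mul_zero, zero_smul]
    · intro h; exact absurd (Finset.mem_univ _) h
  have hee : ∀ p j, e p j * (starRingEnd ℂ) (e p j) = 1 := by
    intro p j
    rw [he]
    simp only
    rw [← Complex.exp_conj, ← Complex.exp_add]
    rw [show (starRingEnd ℂ) (-Complex.I * ((p : ℂ) - (p₀ : ℂ)) * ((E j : ℂ) - (E (π j) : ℂ)))
        = -(-Complex.I * ((p : ℂ) - (p₀ : ℂ)) * ((E j : ℂ) - (E (π j) : ℂ))) by
      simp only [_root_.map_mul, map_sub, map_neg, Complex.conj_ofReal, Complex.conj_I]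
      ring]
    simp
  have hkey : ∀ p, Us p * ρs * (Us p)ᴴ = V * ρs * Vᴴ := by
    intro p
    have hRHS : V * ρs * Vᴴ = ∑ n, (q n : ℂ) • Matrix.vecMulVec (v (π n)) (star (v (π n))) := by
      rw [hρs, Finset.mul_sum, Finset.sum_mul]
      refine Finset.sum_congr rfl fun n _ => ?_
      rw [mul_smul_comm, smul_mul_assoc, aux_mul_vecMulVec, hVperm,
        aux_vecMulVec_mul_conjTranspose, hVperm]
    have h1 : Us p * ρs = ∑ j, (e p j * (q j : ℂ)) • Matrix.vecMulVec (v (π j)) (star (v j)) := by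
      rw [hUs' p, hρs, Finset.sum_mul]
      refine Finset.sum_congr rfl fun j _ => ?_
      rw [Finset.mul_sum, Finset.sum_eq_single j]
      · rw [smul_mul_assoc, mul_smul_comm, smul_smul, aux_vecMulVec_mul_vecMulVec,
          hortho, if_pos rfl, one_smul]
      · intro n _ hn
        rw [smul_mul_assoc, mul_smul_comm, aux_vecMulVec_mul_vecMulVec, hortho,
          if_neg (Ne.symm hn), zero_smul, smul_zero, smul_zero]
      · intro h; exact absurd (Finset.mem_univ _) h
    have h2 : (Us p)ᴴ = ∑ k, (starRingEnd ℂ) (e p k) • Matrix.vecMulVec (v k) (star (v (π k))) := by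
      rw [hUs' p, conjTranspose_sum]
      refine Finset.sum_congr rfl fun k _ => ?_
      rw [conjTranspose_smul, aux_conjTranspose_vecMulVec, star_star]
      rfl
    rw [h1, h2, hRHS, Finset.sum_mul]
    refine Finset.sum_congr rfl fun j _ => ?_
    rw [Finset.mul_sum, Finset.sum_eq_single j]
    · rw [smul_mul_assoc, mul_smul_comm, smul_smul, aux_vecMulVec_mul_vecMulVec,
        hortho, if_pos rfl, one_smul]
      congr 1
      rw [mul_comm (e p j), mul_assoc, hee, mul_one]
    · intro k _ hk
      rw [smul_mul_assoc, mul_smul_comm, aux_vecMulVec_mul_vecMulVec, hortho,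
        if_neg (Ne.symm hk), zero_smul, smul_zero, smul_zero]
    · intro h; exact absurd (Finset.mem_univ _) h
  simp only [hkey]
  simp [integral_const, measure_univ]
end

section
/- Let H be a Hermitian n×n complex matrix, let T > 0, and let g = exp(−H/T)/Tr(exp(−H/T)) be the Gibbs (thermal) state of H at temperature T. Then for every density matrix ρ on ℂ^n, F(ρ) ≥ F(g), where F(σ) = Tr(Hσ) − T·S(σ). (The thermal state has minimum free energy among all states, for the given Hamiltonian and temperature.) -/
open Matrix Polynomial
open scoped ComplexOrder

/-- The von Neumann entropy `S(σ) = Σᵢ η(λᵢ)` of a (Hermitian) matrix, where `λᵢ` are its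
eigenvalues and `η(x) = −x log x`. -/
noncomputable def vnEntropy {n : Type*} [Fintype n] [DecidableEq n] (σ : Matrix n n ℂ) : ℝ :=
  if h : σ.IsHermitian then ∑ i, Real.negMulLog (h.eigenvalues i) else 0

/-- The free energy `F(σ) = Tr(Hσ) − T·S(σ)`. -/
noncomputable def freeEnergy {n : Type*} [Fintype n] [DecidableEq n]
    (H : Matrix n n ℂ) (T : ℝ) (σ : Matrix n n ℂ) : ℝ :=
  ((H * σ).trace).re - T * vnEntropy σ

-- Gibbs inequality (classical)
lemma gibbs_classical {n : ℕ} (p q : Fin n → ℝ) (hp : ∀ i, 0 ≤ p i) (hq : ∀ i, 0 < q i)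
    (hp1 : ∑ i, p i = 1) (hq1 : ∑ i, q i ≤ 1) :
    ∑ i, Real.negMulLog (p i) ≤ ∑ i, p i * (- Real.log (q i)) := by
  have key : ∀ i, Real.negMulLog (p i) ≤ p i * (- Real.log (q i)) + (q i - p i) := by
    intro i
    rcases eq_or_lt_of_le (hp i) with h0 | h0
    · simp [← h0, Real.negMulLog, (hq i).le]
    · have h1 : Real.log (q i / p i) ≤ q i / p i - 1 :=
        Real.log_le_sub_one_of_pos (div_pos (hq i) h0)
      rw [Real.log_div (hq i).ne' h0.ne'] at h1
      have h2 := mul_le_mul_of_nonneg_left h1 h0.le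
      rw [mul_sub, mul_sub, mul_div_cancel₀ _ h0.ne'] at h2
      simp only [Real.negMulLog]
      nlinarith
  calc ∑ i, Real.negMulLog (p i) ≤ ∑ i, (p i * (- Real.log (q i)) + (q i - p i)) :=
        Finset.sum_le_sum fun i _ => key i
    _ = ∑ i, p i * (- Real.log (q i)) + (∑ i, q i - ∑ i, p i) := by
        rw [Finset.sum_add_distrib, Finset.sum_sub_distrib]
    _ ≤ ∑ i, p i * (- Real.log (q i)) := by rw [hp1]; linarith

-- Jensen for exp
lemma exp_sum_le {n : ℕ} (w x : Fin n → ℝ) (hw : ∀ i, 0 ≤ w i) (hw1 : ∑ i, w i = 1) :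
    Real.exp (∑ i, w i * x i) ≤ ∑ i, w i * Real.exp (x i) := by
  have := convexOn_exp.map_sum_le (fun i _ => hw i) hw1 (fun i _ => Set.mem_univ (x i))
  simpa [smul_eq_mul] using this

lemma charpoly_unitary_conj {n : ℕ} (U : Matrix.unitaryGroup (Fin n) ℂ)
    (A : Matrix (Fin n) (Fin n) ℂ) :
    ((U : Matrix (Fin n) (Fin n) ℂ) * A * star (U : Matrix (Fin n) (Fin n) ℂ)).charpoly
      = A.charpoly := by
  have hu : IsUnit (U : Matrix (Fin n) (Fin n) ℂ) :=
    ⟨⟨U, star (U : Matrix (Fin n) (Fin n) ℂ),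
      U.prop.2, U.prop.1⟩, rfl⟩
  unfold Matrix.charpoly
  have : charmatrix ((U : Matrix (Fin n) (Fin n) ℂ) * A * star (U : Matrix (Fin n) (Fin n) ℂ))
      = (U : Matrix (Fin n) (Fin n) ℂ).map C * charmatrix A
        * (star (U : Matrix (Fin n) (Fin n) ℂ)).map C := by
    unfold charmatrix
    rw [Matrix.mul_sub, Matrix.sub_mul]
    congr 1
    · -- U.map C * scalar X * (star U).map C = scalar X
      rw [mul_assoc, (Matrix.scalar_commute (X : ℂ[X]) (Commute.all X) _).eq, ← Matrix.mul_assoc,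
        ← Matrix.map_mul, show (U : Matrix (Fin n) (Fin n) ℂ) * star (U : Matrix (Fin n) (Fin n) ℂ) = 1 from U.prop.2]
      simp
    · simp [RingHom.mapMatrix_apply, Matrix.map_mul]
  rw [this, Matrix.det_mul, Matrix.det_mul, mul_comm, ← mul_assoc, ← Matrix.det_mul,
    ← Matrix.map_mul, show star (U : Matrix (Fin n) (Fin n) ℂ) * (U : Matrix (Fin n) (Fin n) ℂ) = 1 from U.prop.1]
  simp

lemma charpoly_diag {n : ℕ} (d : Fin n → ℂ) :
    (diagonal d).charpoly = ∏ i, (X - C (d i)) := by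
  rw [Matrix.charpoly_of_upperTriangular _ (Matrix.blockTriangular_diagonal d)]
  simp

lemma multiset_eigenvalues {n : ℕ} (U : Matrix.unitaryGroup (Fin n) ℂ) (d : Fin n → ℝ)
    {A : Matrix (Fin n) (Fin n) ℂ} (hA : A.IsHermitian)
    (h : A = U * diagonal (fun i => (d i : ℂ)) * star (U : Matrix (Fin n) (Fin n) ℂ))
    (f : ℝ → ℝ) : ∑ i, f (hA.eigenvalues i) = ∑ i, f (d i) := by
  have h1 : A.charpoly = ∏ i, (X - C ((d i : ℂ))) := by
    rw [h, charpoly_unitary_conj, charpoly_diag]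
  have h2 : A.charpoly = ∏ i, (X - C ((hA.eigenvalues i : ℂ))) := by
    conv_lhs => rw [hA.spectral_theorem, Unitary.conjStarAlgAut_apply]
    rw [charpoly_unitary_conj]
    have : (diagonal (RCLike.ofReal ∘ hA.eigenvalues) : Matrix (Fin n) (Fin n) ℂ)
        = diagonal (fun i => ((hA.eigenvalues i : ℝ) : ℂ)) := rfl
    rw [this, charpoly_diag]
  -- multisets of complex roots are equal
  have hro : ∀ e : Fin n → ℝ,
      (∏ i, (X - C ((e i : ℂ)))).roots = Finset.univ.val.map (fun i => ((e i : ℝ) : ℂ)) := by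
    intro e
    rw [Finset.prod_eq_multiset_prod]
    rw [show (Multiset.map (fun i => X - C ((e i : ℝ) : ℂ)) Finset.univ.val)
        = (Multiset.map (fun a => X - C a) (Finset.univ.val.map (fun i => ((e i : ℝ) : ℂ)))) by
      rw [Multiset.map_map]; rfl]
    exact roots_multiset_prod_X_sub_C _
  have h3 : Finset.univ.val.map (fun i => ((d i : ℝ) : ℂ))
      = Finset.univ.val.map (fun i => ((hA.eigenvalues i : ℝ) : ℂ)) := by
    rw [← hro d, ← hro hA.eigenvalues, ← h1, ← h2]
  have h4 : Finset.univ.val.map d = Finset.univ.val.map hA.eigenvalues := by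
    apply Multiset.map_injective (f := (Complex.ofReal : ℝ → ℂ)) Complex.ofReal_injective
    rw [Multiset.map_map, Multiset.map_map]
    exact h3
  calc ∑ i, f (hA.eigenvalues i) = ((Finset.univ.val.map hA.eigenvalues).map f).sum := by
        rw [Multiset.map_map]; rfl
    _ = ((Finset.univ.val.map d).map f).sum := by rw [h4]
    _ = ∑ i, f (d i) := by rw [Multiset.map_map]; rfl

variable {n : ℕ}

lemma conj_smul_diag (U : Matrix.unitaryGroup (Fin n) ℂ) (c : ℂ) (D : Matrix (Fin n) (Fin n) ℂ) :
    c • ((U : Matrix (Fin n) (Fin n) ℂ) * D * star (U : Matrix (Fin n) (Fin n) ℂ))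
      = (U : Matrix (Fin n) (Fin n) ℂ) * (c • D) * star (U : Matrix (Fin n) (Fin n) ℂ) := by
  rw [mul_smul_comm, smul_mul_assoc]

lemma exp_smul_herm (H : Matrix (Fin n) (Fin n) ℂ) (hH : H.IsHermitian) (T : ℝ) :
    NormedSpace.exp ((-(1 / T : ℂ)) • H)
      = (hH.eigenvectorUnitary : Matrix (Fin n) (Fin n) ℂ)
        * diagonal (fun i => ((Real.exp (-(hH.eigenvalues i) / T) : ℝ) : ℂ))
        * star (hH.eigenvectorUnitary : Matrix (Fin n) (Fin n) ℂ) := by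
  have key : (-(1 / T : ℂ)) • H
      = (hH.eigenvectorUnitary : Matrix (Fin n) (Fin n) ℂ)
        * ((-(1 / T : ℂ)) • diagonal (RCLike.ofReal ∘ hH.eigenvalues))
        * star (hH.eigenvectorUnitary : Matrix (Fin n) (Fin n) ℂ) := by
    conv_lhs => rw [hH.spectral_theorem, Unitary.conjStarAlgAut_apply]
    exact conj_smul_diag _ _ _
  set u := Unitary.toUnits hH.eigenvectorUnitary with hu
  have hcoe : (↑u : Matrix (Fin n) (Fin n) ℂ) = (hH.eigenvectorUnitary : Matrix (Fin n) (Fin n) ℂ) := rfl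
  have hinv : (↑u⁻¹ : Matrix (Fin n) (Fin n) ℂ)
      = star (hH.eigenvectorUnitary : Matrix (Fin n) (Fin n) ℂ) := rfl
  rw [key, ← hinv, ← hcoe, Matrix.exp_units_conj, hcoe, hinv]
  congr 1
  congr 1
  rw [← diagonal_smul, Matrix.exp_diagonal]
  apply congrArg diagonal
  funext i
  rw [Pi.coe_exp]
  simp only [Pi.smul_apply, Function.comp_apply, smul_eq_mul]
  rw [← Complex.exp_eq_exp_ℂ]
  rw [Complex.ofReal_exp]
  congr 1
  push_cast
  ring_nf
  rfl

variable {n : ℕ}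

lemma trace_unitary_conj (U : Matrix.unitaryGroup (Fin n) ℂ) (D : Matrix (Fin n) (Fin n) ℂ) :
    ((U : Matrix (Fin n) (Fin n) ℂ) * D * star (U : Matrix (Fin n) (Fin n) ℂ)).trace = D.trace := by
  rw [Matrix.trace_mul_cycle, U.prop.1, Matrix.one_mul]

lemma herm_conj_diag_real (U : Matrix.unitaryGroup (Fin n) ℂ) (d : Fin n → ℝ) :
    ((U : Matrix (Fin n) (Fin n) ℂ) * diagonal (fun i => (d i : ℂ))
      * star (U : Matrix (Fin n) (Fin n) ℂ)).IsHermitian := by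
  rw [Matrix.star_eq_conjTranspose]
  apply Matrix.isHermitian_mul_mul_conjTranspose
  rw [Matrix.IsHermitian, Matrix.diagonal_conjTranspose]
  apply congrArg diagonal
  funext i
  simp [Complex.conj_ofReal]

lemma trace_mul_diag (M : Matrix (Fin n) (Fin n) ℂ) (v : Fin n → ℂ) :
    (M * diagonal v).trace = ∑ j, M j j * v j := by
  simp [Matrix.trace, Matrix.diag, Matrix.mul_diagonal]

lemma entry_conj_diag (W : Matrix (Fin n) (Fin n) ℂ) (v : Fin n → ℝ) (j : Fin n) :
    (star W * diagonal (fun i => (v i : ℂ)) * W) j j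
      = ((∑ i, v i * Complex.normSq (W i j) : ℝ) : ℂ) := by
  rw [Matrix.mul_apply]
  push_cast
  apply Finset.sum_congr rfl
  intro k _
  rw [Matrix.mul_diagonal, Matrix.star_apply]
  have h1 : W k j * (starRingEnd ℂ) (W k j) = ((Complex.normSq (W k j) : ℝ) : ℂ) :=
    Complex.mul_conj _
  calc star (W k j) * ((v k : ℝ) : ℂ) * W k j
      = ((v k : ℝ) : ℂ) * (W k j * (starRingEnd ℂ) (W k j)) := by
        rw [Complex.star_def]; ring
    _ = _ := by rw [h1]

lemma col_sums (W : Matrix.unitaryGroup (Fin n) ℂ) (j : Fin n) :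
    ∑ i, Complex.normSq ((W : Matrix (Fin n) (Fin n) ℂ) i j) = 1 := by
  have h := congrFun (congrFun W.prop.1 j) j
  rw [Matrix.mul_apply] at h
  have key : (((∑ i, Complex.normSq ((W : Matrix (Fin n) (Fin n) ℂ) i j)) : ℝ) : ℂ)
      = (1 : Matrix (Fin n) (Fin n) ℂ) j j := by
    rw [← h]
    push_cast
    apply Finset.sum_congr rfl
    intro k _
    rw [Matrix.star_apply, Complex.star_def, mul_comm, Complex.mul_conj]
  rw [Matrix.one_apply_eq] at key
  exact_mod_cast key

lemma row_sums (W : Matrix.unitaryGroup (Fin n) ℂ) (i : Fin n) :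
    ∑ j, Complex.normSq ((W : Matrix (Fin n) (Fin n) ℂ) i j) = 1 := by
  have h := congrFun (congrFun W.prop.2 i) i
  rw [Matrix.mul_apply] at h
  have key : (((∑ j, Complex.normSq ((W : Matrix (Fin n) (Fin n) ℂ) i j)) : ℝ) : ℂ)
      = (1 : Matrix (Fin n) (Fin n) ℂ) i i := by
    rw [← h]
    push_cast
    apply Finset.sum_congr rfl
    intro k _
    rw [Matrix.star_apply, Complex.star_def, Complex.mul_conj]
  rw [Matrix.one_apply_eq] at key
  exact_mod_cast key

/-- the Gibbs state `g = exp(−H/T)/Tr(exp(−H/T))` has minimum free energy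
among all density matrices. -/
theorem gibbs_state_minimizes_free_energy
    {n : ℕ} (H : Matrix (Fin n) (Fin n) ℂ) (hH : H.IsHermitian)
    (T : ℝ) (hT : 0 < T)
    (g : Matrix (Fin n) (Fin n) ℂ)
    (hg : g = ((NormedSpace.exp ((-(1 / T : ℂ)) • H)).trace)⁻¹ •
              NormedSpace.exp ((-(1 / T : ℂ)) • H)) :
    ∀ ρ : Matrix (Fin n) (Fin n) ℂ, IsDensityMatrix ρ →
      freeEnergy H T g ≤ freeEnergy H T ρ := by
  intro ρ hρ
  rcases Nat.eq_zero_or_pos n with hn0 | hn0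
  · exfalso
    have := hρ.2
    subst hn0
    simp [Matrix.trace] at this
  have hne : Nonempty (Fin n) := ⟨⟨0, hn0⟩⟩
  -- Gibbs-state side
  set U := hH.eigenvectorUnitary with hU
  set lam := hH.eigenvalues with hlam
  set E : Fin n → ℝ := fun i => Real.exp (-(lam i) / T) with hE
  set Z : ℝ := ∑ i, E i with hZ
  have hEpos : ∀ i, 0 < E i := fun i => Real.exp_pos _
  have hZpos : 0 < Z := Finset.sum_pos (fun i _ => hEpos i) Finset.univ_nonempty
  have hexp := exp_smul_herm H hH T
  have htr : (NormedSpace.exp ((-(1 / T : ℂ)) • H)).trace = (Z : ℂ) := by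
    rw [hexp, trace_unitary_conj, Matrix.trace_diagonal, hZ]
    push_cast [hE]
    rfl
  set d : Fin n → ℝ := fun i => E i / Z with hd
  have hgd : g = (U : Matrix (Fin n) (Fin n) ℂ) * diagonal (fun i => (d i : ℂ))
      * star (U : Matrix (Fin n) (Fin n) ℂ) := by
    rw [hg, htr, hexp, conj_smul_diag, ← diagonal_smul]
    congr 1
    congr 1
    apply congrArg diagonal
    funext i
    simp only [Pi.smul_apply, smul_eq_mul, hd, hE, hlam]
    push_cast
    ring
  have hgH : g.IsHermitian := hgd ▸ herm_conj_diag_real U d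
  have hdpos : ∀ i, 0 < d i := fun i => div_pos (hEpos i) hZpos
  have hdsum : ∑ i, d i = 1 := by
    rw [hd, ← Finset.sum_div, ← hZ, div_self hZpos.ne']
  have hSg : vnEntropy g = ∑ i, Real.negMulLog (d i) := by
    rw [vnEntropy, dif_pos hgH]
    exact multiset_eigenvalues U d hgH hgd Real.negMulLog
  have hHg : ((H * g).trace) = ((∑ i, lam i * d i : ℝ) : ℂ) := by
    conv_lhs => rw [hH.spectral_theorem, Unitary.conjStarAlgAut_apply, hgd]
    rw [show (U : Matrix (Fin n) (Fin n) ℂ) * diagonal (RCLike.ofReal ∘ lam)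
          * star (U : Matrix (Fin n) (Fin n) ℂ)
          * ((U : Matrix (Fin n) (Fin n) ℂ) * diagonal (fun i => (d i : ℂ))
            * star (U : Matrix (Fin n) (Fin n) ℂ))
        = (U : Matrix (Fin n) (Fin n) ℂ)
          * (diagonal (RCLike.ofReal ∘ lam) * diagonal (fun i => (d i : ℂ)))
          * star (U : Matrix (Fin n) (Fin n) ℂ) by
      have hcanc : ∀ X : Matrix (Fin n) (Fin n) ℂ,
          star (U : Matrix (Fin n) (Fin n) ℂ) * ((U : Matrix (Fin n) (Fin n) ℂ) * X) = X := by
        intro X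
        rw [← Matrix.mul_assoc, U.prop.1, Matrix.one_mul]
      simp only [Matrix.mul_assoc, hcanc]]
    rw [trace_unitary_conj, Matrix.diagonal_mul_diagonal, Matrix.trace_diagonal]
    push_cast
    rfl
  have hFg : freeEnergy H T g = -T * Real.log Z := by
    have hlog : ∀ i, Real.negMulLog (d i) = d i * (lam i / T) + d i * Real.log Z := by
      intro i
      rw [Real.negMulLog, hd]
      simp only
      rw [Real.log_div (hEpos i).ne' hZpos.ne', hE]
      simp only
      rw [Real.log_exp]
      field_simp
      ring
    rw [freeEnergy, hSg, hHg, Complex.ofReal_re]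
    rw [Finset.sum_congr rfl fun i _ => hlog i, Finset.sum_add_distrib, ← Finset.sum_mul, hdsum]
    have h1 : ∑ i, d i * (lam i / T) = (∑ i, lam i * d i) / T := by
      rw [Finset.sum_div]
      exact Finset.sum_congr rfl fun i _ => by ring
    rw [h1]
    field_simp
    ring
  -- density-matrix side
  have hρH : ρ.IsHermitian := hρ.1.1
  set V := hρH.eigenvectorUnitary with hV
  set p := hρH.eigenvalues with hp
  have hppos : ∀ i, 0 ≤ p i := fun i => hρ.1.eigenvalues_nonneg i
  have hpsum : ∑ i, p i = 1 := by
    have key : ((∑ i, p i : ℝ) : ℂ) = 1 := by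
      rw [← hρ.2]
      conv_rhs => rw [hρH.spectral_theorem, Unitary.conjStarAlgAut_apply]
      rw [trace_unitary_conj, Matrix.trace_diagonal]
      push_cast
      rfl
    exact_mod_cast key
  have hSρ : vnEntropy ρ = ∑ i, Real.negMulLog (p i) := by
    rw [vnEntropy, dif_pos hρH]
  set Wu : Matrix.unitaryGroup (Fin n) ℂ := star U * V with hWu
  set W : Matrix (Fin n) (Fin n) ℂ := (Wu : Matrix (Fin n) (Fin n) ℂ) with hW
  have hWcoe : W = star (U : Matrix (Fin n) (Fin n) ℂ) * (V : Matrix (Fin n) (Fin n) ℂ) := rfl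
  set w : Fin n → Fin n → ℝ := fun i j => Complex.normSq (W i j) with hw
  set ε : Fin n → ℝ := fun j => ∑ i, lam i * w i j with hε
  have hM : star (V : Matrix (Fin n) (Fin n) ℂ) * H * (V : Matrix (Fin n) (Fin n) ℂ)
      = star W * diagonal (fun i => (lam i : ℂ)) * W := by
    conv_lhs => rw [hH.spectral_theorem, Unitary.conjStarAlgAut_apply]
    rw [hWcoe, StarMul.star_mul, star_star]
    simp only [Matrix.mul_assoc]
    rfl
  have hMjj : ∀ j, (star (V : Matrix (Fin n) (Fin n) ℂ) * H * (V : Matrix (Fin n) (Fin n) ℂ)) j j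
      = ((ε j : ℝ) : ℂ) := by
    intro j
    rw [hM, entry_conj_diag]
  have hTrρ : ((H * ρ).trace).re = ∑ j, ε j * p j := by
    have key : (H * ρ).trace = ((∑ j, ε j * p j : ℝ) : ℂ) := by
      conv_lhs => rw [hρH.spectral_theorem, Unitary.conjStarAlgAut_apply]
      rw [show H * ((V : Matrix (Fin n) (Fin n) ℂ) * diagonal (RCLike.ofReal ∘ p)
            * star (V : Matrix (Fin n) (Fin n) ℂ))
          = (H * (V : Matrix (Fin n) (Fin n) ℂ) * diagonal (RCLike.ofReal ∘ p))
            * star (V : Matrix (Fin n) (Fin n) ℂ) by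
        simp only [Matrix.mul_assoc]]
      rw [Matrix.trace_mul_comm, ← Matrix.mul_assoc, ← Matrix.mul_assoc, trace_mul_diag]
      push_cast
      apply Finset.sum_congr rfl
      intro j _
      rw [hMjj j]
      rfl
    rw [key, Complex.ofReal_re]
  -- Jensen: ∑ exp(-ε j / T) ≤ Z
  have hwnn : ∀ i j, 0 ≤ w i j := fun i j => Complex.normSq_nonneg _
  have hJen : ∀ j, Real.exp (-(ε j) / T) ≤ ∑ i, w i j * E i := by
    intro j
    have h0 := exp_sum_le (fun i => w i j) (fun i => -(lam i) / T)
      (fun i => hwnn i j) (col_sums Wu j)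
    have harg : -(ε j) / T = ∑ i, w i j * (-(lam i) / T) := by
      have h1 : -(ε j) / T = ∑ i, -(lam i * w i j) / T := by
        rw [hε]
        simp only
        rw [← Finset.sum_div, ← Finset.sum_neg_distrib]
      rw [h1]
      exact Finset.sum_congr rfl fun i _ => by ring
    rw [harg]
    refine h0.trans (le_of_eq ?_)
    exact Finset.sum_congr rfl fun i _ => by rw [hE]
  have hZle : ∑ j, Real.exp (-(ε j) / T) ≤ Z := by
    calc ∑ j, Real.exp (-(ε j) / T) ≤ ∑ j, ∑ i, w i j * E i :=
          Finset.sum_le_sum fun j _ => hJen j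
      _ = ∑ i, (∑ j, w i j) * E i := by
          rw [Finset.sum_comm]
          exact Finset.sum_congr rfl fun i _ => (Finset.sum_mul _ _ _).symm
      _ = ∑ i, E i := by
          refine Finset.sum_congr rfl fun i _ => ?_
          rw [show ∑ j, w i j = 1 from row_sums Wu i, one_mul]
      _ = Z := hZ.symm
  set q : Fin n → ℝ := fun j => Real.exp (-(ε j) / T) / Z with hq
  have hqpos : ∀ j, 0 < q j := fun j => div_pos (Real.exp_pos _) hZpos
  have hqsum : ∑ j, q j ≤ 1 := by
    rw [hq]
    simp only
    rw [← Finset.sum_div]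
    exact (div_le_one hZpos).mpr hZle
  have hgibbs := gibbs_classical p q hppos hqpos hpsum hqsum
  have hlogq : ∀ j, -Real.log (q j) = ε j / T + Real.log Z := by
    intro j
    rw [hq]
    simp only
    rw [Real.log_div (Real.exp_pos _).ne' hZpos.ne', Real.log_exp]
    ring
  have hSρle : vnEntropy ρ ≤ (∑ j, ε j * p j) / T + Real.log Z := by
    rw [hSρ]
    refine hgibbs.trans (le_of_eq ?_)
    calc ∑ j, p j * (-Real.log (q j)) = ∑ j, (ε j * p j / T + p j * Real.log Z) := by
          refine Finset.sum_congr rfl fun j _ => ?_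
          rw [hlogq j]
          ring
      _ = (∑ j, ε j * p j) / T + Real.log Z := by
          rw [Finset.sum_add_distrib, ← Finset.sum_div, ← Finset.sum_mul, hpsum, one_mul]
  -- conclude
  rw [hFg, freeEnergy, hTrρ]
  have h2 := mul_le_mul_of_nonneg_left hSρle hT.le
  have h3 : T * ((∑ j, ε j * p j) / T + Real.log Z)
      = (∑ j, ε j * p j) + T * Real.log Z := by
    rw [mul_add, mul_div_cancel₀ _ hT.ne']
  linarith
end

section
/- Let E : Fin d → ℝ be a vector of energies, let T > 0, let g be the classical Gibbs distribution g_i = exp(−E_i/T)/Σ_j exp(−E_j/T), let δ > 0, and let p be a probability distribution on Fin d with |p_i − g_i| ≤ δ for all i. Then 0 ≤ F(p) − F(g) ≤ T·δ²·Σ_i (1/g_i), where F(q) = Σ_i q_i E_i − T·Σ_i η(q_i). (The free energy of a distribution δ-close to thermal exceeds the thermal free energy only by a quantity of order δ²; this is the claim that ΔF_b is of order δp² for each small step of the optimal protocol.) -/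
/-- The classical free energy `F(q) = Σᵢ qᵢ Eᵢ − T·Σᵢ η(qᵢ)` with `η(x) = −x log x`. -/
noncomputable def classicalFreeEnergy {d : ℕ} (E : Fin d → ℝ) (T : ℝ) (q : Fin d → ℝ) : ℝ :=
  ∑ i, q i * E i - T * ∑ i, Real.negMulLog (q i)

/-- Pointwise lower bound: `p − g ≤ p log p − p log g` for `0 ≤ p`, `0 < g`. -/
lemma kl_pointwise_lower (p g : ℝ) (hp : 0 ≤ p) (hgpos : 0 < g) :
    p - g ≤ p * Real.log p - p * Real.log g := by
  rcases eq_or_lt_of_le hp with h | h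
  · simp [← h]; linarith
  · have hlog : Real.log (g / p) ≤ g / p - 1 :=
      Real.log_le_sub_one_of_pos (div_pos hgpos h)
    rw [Real.log_div (ne_of_gt hgpos) (ne_of_gt h)] at hlog
    have := mul_le_mul_of_nonneg_left hlog (le_of_lt h)
    have hpg : p * (g / p - 1) = g - p := by field_simp
    nlinarith

/-- Pointwise upper bound: `p log p − p log g ≤ (p−g)²/g + (p − g)`. -/
lemma kl_pointwise_upper (p g : ℝ) (hp : 0 ≤ p) (hgpos : 0 < g) :
    p * Real.log p - p * Real.log g ≤ (p - g) ^ 2 / g + (p - g) := by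
  rcases eq_or_lt_of_le hp with h | h
  · simp [← h]
    have : g ^ 2 / g = g := by field_simp
    nlinarith
  · have hlog : Real.log (p / g) ≤ p / g - 1 :=
      Real.log_le_sub_one_of_pos (div_pos h hgpos)
    rw [Real.log_div (ne_of_gt h) (ne_of_gt hgpos)] at hlog
    have h1 := mul_le_mul_of_nonneg_left hlog (le_of_lt h)
    have h2 : p * (p / g - 1) = (p - g) ^ 2 / g + (p - g) := by field_simp; ring
    nlinarith

/-- the free energy of a probability distribution `δ`-close to the classical
Gibbs distribution `g` exceeds the Gibbs free energy by at most `T·δ²·Σᵢ 1/gᵢ` (and is never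
smaller): the free energy increase of a near-thermal state is of order `δ²`. -/
theorem free_energy_of_near_thermal_distribution
    {d : ℕ} (E : Fin d → ℝ) (T : ℝ) (hT : 0 < T)
    (g : Fin d → ℝ) (hg : ∀ i, g i = Real.exp (-E i / T) / ∑ j, Real.exp (-E j / T))
    (δ : ℝ) (hδ : 0 < δ)
    (p : Fin d → ℝ) (hp_nonneg : ∀ i, 0 ≤ p i) (hp_sum : ∑ i, p i = 1)
    (hclose : ∀ i, |p i - g i| ≤ δ) :
    0 ≤ classicalFreeEnergy E T p - classicalFreeEnergy E T g ∧
    classicalFreeEnergy E T p - classicalFreeEnergy E T g ≤ T * δ ^ 2 * ∑ i, (g i)⁻¹ := by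
  have hd : d ≠ 0 := by rintro rfl; simp at hp_sum
  haveI : Nonempty (Fin d) := ⟨⟨0, Nat.pos_of_ne_zero hd⟩⟩
  set Z : ℝ := ∑ j, Real.exp (-E j / T) with hZ
  have hZpos : 0 < Z :=
    Finset.sum_pos (fun j _ => Real.exp_pos _) Finset.univ_nonempty
  have hgpos : ∀ i, 0 < g i := fun i => by
    rw [hg i]; exact div_pos (Real.exp_pos _) hZpos
  have hg_sum : ∑ i, g i = 1 := by
    simp only [hg]
    rw [← Finset.sum_div, ← hZ, div_self (ne_of_gt hZpos)]
  have hE : ∀ i, E i = -T * Real.log (g i) - T * Real.log Z := by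
    intro i
    rw [hg i, Real.log_div (ne_of_gt (Real.exp_pos _)) (ne_of_gt hZpos), Real.log_exp]
    field_simp
    ring
  -- the relative entropy term
  set S : ℝ := ∑ i, (p i * Real.log (p i) - p i * Real.log (g i)) with hS
  have h1 : ∀ (q : Fin d → ℝ), ∑ i, q i = 1 →
      ∑ i, q i * E i = -T * ∑ i, q i * Real.log (g i) - T * Real.log Z := by
    intro q hq
    calc ∑ i, q i * E i
        = ∑ i, (-T * (q i * Real.log (g i)) - T * Real.log Z * q i) := by
          refine Finset.sum_congr rfl fun i _ => ?_
          rw [hE i]; ring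
      _ = -T * ∑ i, q i * Real.log (g i) - T * Real.log Z * ∑ i, q i := by
          rw [Finset.sum_sub_distrib, Finset.mul_sum, Finset.mul_sum]
      _ = _ := by rw [hq]; ring
  have hneg : ∀ (q : Fin d → ℝ),
      ∑ i, Real.negMulLog (q i) = -∑ i, q i * Real.log (q i) := by
    intro q
    simp [Real.negMulLog, neg_mul, Finset.sum_neg_distrib]
  have key : classicalFreeEnergy E T p - classicalFreeEnergy E T g = T * S := by
    unfold classicalFreeEnergy
    rw [h1 p hp_sum, h1 g hg_sum, hneg, hneg, hS, Finset.sum_sub_distrib]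
    ring
  constructor
  · rw [key]
    have hSlb : (0 : ℝ) ≤ S := by
      have : ∑ i, (p i - g i) ≤ S := by
        apply Finset.sum_le_sum
        intro i _
        exact kl_pointwise_lower (p i) (g i) (hp_nonneg i) (hgpos i)
      rw [Finset.sum_sub_distrib, hp_sum, hg_sum] at this
      linarith
    positivity
  · rw [key]
    have hSub : S ≤ δ ^ 2 * ∑ i, (g i)⁻¹ := by
      have step1 : S ≤ ∑ i, ((p i - g i) ^ 2 / g i + (p i - g i)) := by
        apply Finset.sum_le_sum
        intro i _
        exact kl_pointwise_upper (p i) (g i) (hp_nonneg i) (hgpos i)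
      have step2 : ∑ i, ((p i - g i) ^ 2 / g i + (p i - g i))
          = ∑ i, (p i - g i) ^ 2 / g i := by
        rw [Finset.sum_add_distrib, Finset.sum_sub_distrib, hp_sum, hg_sum]
        ring
      have step3 : ∑ i, (p i - g i) ^ 2 / g i ≤ ∑ i, δ ^ 2 * (g i)⁻¹ := by
        apply Finset.sum_le_sum
        intro i _
        rw [div_eq_mul_inv]
        apply mul_le_mul_of_nonneg_right _ (le_of_lt (inv_pos.mpr (hgpos i)))
        have := hclose i
        nlinarith [abs_nonneg (p i - g i), sq_abs (p i - g i)]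
      rw [Finset.mul_sum]
      linarith
    calc T * S ≤ T * (δ ^ 2 * ∑ i, (g i)⁻¹) :=
          mul_le_mul_of_nonneg_left hSub (le_of_lt hT)
      _ = T * δ ^ 2 * ∑ i, (g i)⁻¹ := by ring
end

section
/- Let E^u : Fin d → ℝ and E^b : Fin d → ℝ be energy vectors, let T > 0, let p' be the classical Gibbs distribution for E^b at temperature T (p'_n = exp(−E^b_n/T)/Σ_m exp(−E^b_m/T)), let δ > 0, and let p be a probability distribution on Fin d with |p_n − p'_n| ≤ δ for all n. Consider the swap step in which the subsystem's energy-level occupation changes from p to p' while the bath unit's changes from p' to p. Then the total energy change ΔE := Σ_n (p'_n − p_n) E^u_n + Σ_n (p_n − p'_n) E^b_n satisfies ΔF_u ≤ ΔE ≤ ΔF_u + T·δ²·Σ_n (1/p'_n), where ΔF_u = [Σ_n p'_n E^u_n − T·Σ_n η(p'_n)] − [Σ_n p_n E^u_n − T·Σ_n η(p_n)] is the change in the subsystem's classical free energy. (Each small swap step of the optimal protocol costs energy equal to the subsystem free-energy change up to order δ².) -/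
/-- in a swap step where the subsystem's occupation changes from `p` to the
bath-thermal distribution `p'` and the bath unit's from `p'` to `p`, the total energy change
equals the subsystem free-energy change up to a positive error of order `δ²`. -/
theorem swap_step_energy_cost
    {d : ℕ} (Eu Eb : Fin d → ℝ) (T : ℝ) (hT : 0 < T)
    (p' : Fin d → ℝ)
    (hp' : ∀ n, p' n = Real.exp (-Eb n / T) / ∑ m, Real.exp (-Eb m / T))
    (δ : ℝ) (hδ : 0 < δ)
    (p : Fin d → ℝ) (hp_nonneg : ∀ n, 0 ≤ p n) (hp_sum : ∑ n, p n = 1)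
    (hclose : ∀ n, |p n - p' n| ≤ δ)
    (ΔE : ℝ) (hΔE : ΔE = ∑ n, (p' n - p n) * Eu n + ∑ n, (p n - p' n) * Eb n)
    (ΔFu : ℝ) (hΔFu : ΔFu = classicalFreeEnergy Eu T p' - classicalFreeEnergy Eu T p) :
    ΔFu ≤ ΔE ∧ ΔE ≤ ΔFu + T * δ ^ 2 * ∑ n, (p' n)⁻¹ := by
  rcases Nat.eq_zero_or_pos d with hd | hd
  · subst hd
    simp [classicalFreeEnergy] at hΔE hΔFu
    simp [hΔE, hΔFu]
  · haveI : Nonempty (Fin d) := ⟨⟨0, hd⟩⟩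
    set Z := ∑ m, Real.exp (-Eb m / T) with hZdef
    have hZpos : 0 < Z := Finset.sum_pos (fun i _ => Real.exp_pos _) Finset.univ_nonempty
    have hp'pos : ∀ n, 0 < p' n := by
      intro n; rw [hp']; positivity
    have hp'sum : ∑ n, p' n = 1 := by
      simp only [hp']
      rw [← Finset.sum_div, div_self hZpos.ne']
    have hlogp' : ∀ n, Real.log (p' n) = -Eb n / T - Real.log Z := by
      intro n
      rw [hp', Real.log_div (Real.exp_ne_zero _) hZpos.ne', Real.log_exp]
    have hEb : ∀ n, Eb n = -T * Real.log (p' n) - T * Real.log Z := by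
      intro n
      have := hlogp' n
      field_simp at this ⊢
      linarith
    have hsum0 : ∑ n, (p n - p' n) = 0 := by
      rw [Finset.sum_sub_distrib, hp_sum, hp'sum]; ring
    -- key identity : ΔE - ΔFu = T * KL
    set K := ∑ n, (p n * Real.log (p n) - p n * Real.log (p' n)) with hKdef
    have expand : ∑ n, (p n - p' n) * Eb n
        = T * (∑ n, (p' n - p n) * Real.log (p' n)) - T * Real.log Z * (∑ n, (p n - p' n)) := by
      rw [Finset.mul_sum, Finset.mul_sum, ← Finset.sum_sub_distrib]
      refine Finset.sum_congr rfl (fun n _ => ?_)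
      rw [hEb n]; ring
    have e2 : ∑ n, (p' n - p n) * Eu n = ∑ n, p' n * Eu n - ∑ n, p n * Eu n := by
      rw [← Finset.sum_sub_distrib]
      exact Finset.sum_congr rfl (fun n _ => by ring)
    have e3 : (∑ n, (p' n - p n) * Real.log (p' n))
        + (∑ n, Real.negMulLog (p' n)) - (∑ n, Real.negMulLog (p n)) = K := by
      rw [hKdef, ← Finset.sum_add_distrib, ← Finset.sum_sub_distrib]
      refine Finset.sum_congr rfl (fun n _ => ?_)
      simp only [Real.negMulLog]; ring
    have hkey : ΔE = ΔFu + T * K := by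
      rw [hΔE, hΔFu]
      unfold classicalFreeEnergy
      rw [expand, hsum0, e2, ← e3]
      ring
    have hKlb : 0 ≤ K := by
      have : ∑ n, (p n - p' n) ≤ K := by
        refine Finset.sum_le_sum (fun n _ => ?_)
        rcases eq_or_lt_of_le (hp_nonneg n) with h0 | h0
        · simp [← h0]
          exact (hp'pos n).le
        · have hlog := Real.log_le_sub_one_of_pos (div_pos (hp'pos n) h0)
          rw [Real.log_div (hp'pos n).ne' h0.ne'] at hlog
          have h2 : p n * (Real.log (p' n) - Real.log (p n)) ≤ p n * (p' n / p n - 1) :=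
            mul_le_mul_of_nonneg_left hlog h0.le
          have h4 : p n * (p' n / p n - 1) = p' n - p n := by field_simp
          linarith
      linarith [hsum0]
    have hKub : K ≤ δ ^ 2 * ∑ n, (p' n)⁻¹ := by
      have : K ≤ ∑ n, (δ ^ 2 * (p' n)⁻¹ + (p n - p' n)) := by
        refine Finset.sum_le_sum (fun n _ => ?_)
        have hppos := hp'pos n
        have hsq : (p n - p' n) ^ 2 ≤ δ ^ 2 := by
          have := hclose n
          nlinarith [abs_nonneg (p n - p' n), sq_abs (p n - p' n)]
        rcases eq_or_lt_of_le (hp_nonneg n) with h0 | h0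
        · simp [← h0]
          rw [← div_eq_mul_inv, le_div_iff₀ hppos]
          nlinarith
        · have hlog := Real.log_le_sub_one_of_pos (div_pos h0 (hp'pos n))
          rw [Real.log_div h0.ne' hppos.ne'] at hlog
          have h2 : p n * (Real.log (p n) - Real.log (p' n)) ≤ p n * (p n / p' n - 1) :=
            mul_le_mul_of_nonneg_left hlog h0.le
          have h3 : p n * (p n / p' n - 1) ≤ δ ^ 2 * (p' n)⁻¹ + (p n - p' n) := by
            rw [div_eq_mul_inv]
            nlinarith [inv_pos.mpr hppos, mul_inv_cancel₀ hppos.ne']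
          nlinarith
      rw [Finset.sum_add_distrib, hsum0, add_zero] at this
      rw [Finset.mul_sum]
      exact this
    constructor
    · rw [hkey]
      have := mul_nonneg hT.le hKlb
      linarith
    · rw [hkey]
      have h6 := mul_le_mul_of_nonneg_left hKub hT.le
      have h7 : T * (δ ^ 2 * ∑ n, (p' n)⁻¹) = T * δ ^ 2 * ∑ n, (p' n)⁻¹ := by ring
      linarith
end

section
/- Let H_u be a Hermitian d_u×d_u matrix and H_b a Hermitian d_b×d_b matrix, let T > 0, let ρ_u be a density matrix on ℂ^{d_u}, and let g_b = exp(−H_b/T)/Tr(exp(−H_b/T)). Let (Ω, μ) be a measurable space with probability measure μ and U : Ω → U(d_u·d_b) a measurable family of unitaries on ℂ^{d_u}⊗ℂ^{d_b}, and set σ = ∫_Ω U(ω)(ρ_u ⊗ g_b)U(ω)† dμ(ω). If the process is cyclic for the subsystem, i.e. Tr_b σ = ρ_u, then the extracted work W := Tr[(H_u ⊗ I + I ⊗ H_b)·(ρ_u ⊗ g_b − σ)] satisfies W ≤ 0. (Kelvin–Planck statement of the second law: positive work cannot be extracted in a cyclic process — one cannot turn heat purely into work.) -/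
open MeasureTheory Matrix
open scoped ComplexOrder Kronecker

attribute [local instance] Matrix.frobeniusNormedAddCommGroup Matrix.frobeniusNormedSpace

/-- Partial trace over the second (bath) tensor factor. -/
noncomputable def ptraceB {du db : ℕ} (M : Matrix (Fin du × Fin db) (Fin du × Fin db) ℂ) :
    Matrix (Fin du) (Fin du) ℂ :=
  Matrix.of fun i j => ∑ k, M (i, k) (j, k)

section Helpers

lemma pointwise_bound {n : Type*} [Fintype n] [DecidableEq n]
    (P Uu : Matrix n n ℂ) (hP : P ∈ Matrix.unitaryGroup n ℂ) (hUu : Uu ∈ Matrix.unitaryGroup n ℂ)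
    (a t : n → ℝ)
    (hpair : ∀ α β, t β * (a α - a β) ≤ t α - t β) :
    ((P * Matrix.diagonal (fun α => (a α : ℂ)) * Pᴴ) *
      (Uu * (P * Matrix.diagonal (fun α => (t α : ℂ)) * Pᴴ) * Uuᴴ)).trace.re ≤
      ∑ α, a α * t α := by
  obtain ⟨hP1, hP2⟩ := Unitary.mem_iff.mp hP
  rw [Matrix.star_eq_conjTranspose] at hP1 hP2
  set B := Pᴴ * Uu * P with hB
  have hBmem : B ∈ Matrix.unitaryGroup n ℂ :=
    mul_mem (mul_mem (Unitary.star_mem hP) hUu) hP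
  obtain ⟨hB1, hB2⟩ := Unitary.mem_iff.mp hBmem
  rw [Matrix.star_eq_conjTranspose] at hB1 hB2
  -- rewrite the big product
  have key : (P * Matrix.diagonal (fun α => (a α : ℂ)) * Pᴴ) *
      (Uu * (P * Matrix.diagonal (fun α => (t α : ℂ)) * Pᴴ) * Uuᴴ) =
      P * (Matrix.diagonal (fun α => (a α : ℂ)) * B * Matrix.diagonal (fun α => (t α : ℂ)) * Bᴴ) * Pᴴ := by
    simp only [hB, Matrix.conjTranspose_mul, Matrix.conjTranspose_conjTranspose]
    simp only [← Matrix.mul_assoc]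
    rw [Matrix.mul_assoc _ P Pᴴ, hP2, Matrix.mul_one]
  rw [key]
  rw [Matrix.trace_mul_cycle]
  rw [← Matrix.mul_assoc, Matrix.mul_assoc Pᴴ, ← Matrix.mul_assoc Pᴴ, hP1, Matrix.one_mul]
  set D : n → n → ℝ := fun α β => Complex.normSq (B α β) with hD
  have hDnn : ∀ α β, 0 ≤ D α β := fun α β => Complex.normSq_nonneg _
  have hrow : ∀ α, ∑ β, D α β = 1 := by
    intro α
    have h : (B * Bᴴ) α α = (1 : Matrix n n ℂ) α α := by rw [hB2]
    rw [Matrix.mul_apply] at h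
    simp only [Matrix.conjTranspose_apply, Matrix.one_apply_eq, Complex.star_def,
      Complex.mul_conj] at h
    exact_mod_cast h
  have hcol : ∀ β, ∑ α, D α β = 1 := by
    intro β
    have h : (Bᴴ * B) β β = (1 : Matrix n n ℂ) β β := by rw [hB1]
    rw [Matrix.mul_apply] at h
    simp only [Matrix.conjTranspose_apply, Matrix.one_apply_eq, Complex.star_def] at h
    have h' : ∑ α, ((Complex.normSq (B α β) : ℂ)) = 1 := by
      rw [← h]; refine Finset.sum_congr rfl fun α _ => ?_
      rw [mul_comm, Complex.mul_conj]
    exact_mod_cast h'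
  have htr : ((Matrix.diagonal fun α => (a α : ℂ)) * B * (Matrix.diagonal fun α => (t α : ℂ)) * Bᴴ).trace
      = ∑ α, ∑ β, ((a α * t β * D α β : ℝ) : ℂ) := by
    rw [Matrix.trace]
    refine Finset.sum_congr rfl fun α _ => ?_
    rw [Matrix.diag_apply, Matrix.mul_apply]
    refine Finset.sum_congr rfl fun β _ => ?_
    rw [Matrix.mul_diagonal, Matrix.diagonal_mul, Matrix.conjTranspose_apply]
    push_cast
    rw [Complex.star_def]
    have : (a α : ℂ) * B α β * (t β : ℂ) * (starRingEnd ℂ) (B α β)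
        = (a α : ℂ) * (t β : ℂ) * (B α β * (starRingEnd ℂ) (B α β)) := by ring
    rw [this, Complex.mul_conj]
  rw [htr]
  have hre : (∑ α, ∑ β, ((a α * t β * D α β : ℝ) : ℂ)).re
      = ∑ α, ∑ β, a α * t β * D α β := by
    rw [Complex.re_sum]
    refine Finset.sum_congr rfl fun α _ => ?_
    rw [Complex.re_sum]
    exact Finset.sum_congr rfl fun β _ => Complex.ofReal_re _
  rw [hre]
  have e1 : ∑ α, ∑ β, a β * t β * D α β = ∑ β, a β * t β := by
    rw [Finset.sum_comm]
    refine Finset.sum_congr rfl fun β _ => ?_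
    rw [← Finset.mul_sum, hcol β, mul_one]
  have e2 : ∑ α, ∑ β, t α * D α β = ∑ α, t α := by
    refine Finset.sum_congr rfl fun α _ => ?_
    rw [← Finset.mul_sum, hrow α, mul_one]
  have e3 : ∑ α, ∑ β, t β * D α β = ∑ β, t β := by
    rw [Finset.sum_comm]
    refine Finset.sum_congr rfl fun β _ => ?_
    rw [← Finset.mul_sum, hcol β, mul_one]
  calc ∑ α, ∑ β, a α * t β * D α β
      ≤ ∑ α, ∑ β, (a β * t β * D α β + t α * D α β - t β * D α β) := by
        refine Finset.sum_le_sum fun α _ => Finset.sum_le_sum fun β _ => ?_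
        have h := hpair α β
        have h2 : a α * t β ≤ a β * t β + t α - t β := by nlinarith [h]
        nlinarith [hDnn α β, mul_le_mul_of_nonneg_right h2 (hDnn α β)]
    _ = ∑ α, a α * t α := by
        simp only [Finset.sum_add_distrib, Finset.sum_sub_distrib, e1, e2, e3]
        ring


lemma kron_conjTranspose {m n : Type*} [Fintype m] [Fintype n]
    (A : Matrix m m ℂ) (B : Matrix n n ℂ) : (A ⊗ₖ B)ᴴ = Aᴴ ⊗ₖ Bᴴ := by
  ext ⟨i, k⟩ ⟨j, l⟩
  simp [Matrix.conjTranspose_apply, star_mul']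

lemma kron_unitary {m n : Type*} [Fintype m] [Fintype n] [DecidableEq m] [DecidableEq n]
    {A : Matrix m m ℂ} {B : Matrix n n ℂ} (hA : A ∈ Matrix.unitaryGroup m ℂ)
    (hB : B ∈ Matrix.unitaryGroup n ℂ) : A ⊗ₖ B ∈ Matrix.unitaryGroup (m × n) ℂ := by
  obtain ⟨hA1, hA2⟩ := Unitary.mem_iff.mp hA
  obtain ⟨hB1, hB2⟩ := Unitary.mem_iff.mp hB
  rw [Matrix.star_eq_conjTranspose] at hA1 hA2 hB1 hB2
  rw [Unitary.mem_iff, Matrix.star_eq_conjTranspose, kron_conjTranspose]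
  constructor
  · rw [← Matrix.mul_kronecker_mul, hA1, hB1, Matrix.one_kronecker_one]
  · rw [← Matrix.mul_kronecker_mul, hA2, hB2, Matrix.one_kronecker_one]

lemma unitary_frobenius_norm {n : Type*} [Fintype n] [DecidableEq n]
    {U : Matrix n n ℂ} (hU : U ∈ Matrix.unitaryGroup n ℂ) :
    ‖U‖ = Real.sqrt (Fintype.card n) := by
  obtain ⟨hU1, hU2⟩ := Unitary.mem_iff.mp hU
  rw [Matrix.star_eq_conjTranspose] at hU1 hU2
  rw [Matrix.frobenius_norm_def, Real.sqrt_eq_rpow]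
  congr 1
  have hrow : ∀ i, ∑ j, ‖U i j‖ ^ (2:ℝ) = 1 := by
    intro i
    have h : (U * Uᴴ) i i = (1 : Matrix n n ℂ) i i := by rw [hU2]
    rw [Matrix.mul_apply] at h
    simp only [Matrix.conjTranspose_apply, Matrix.one_apply_eq, Complex.star_def,
      Complex.mul_conj] at h
    have h' : ∑ j, Complex.normSq (U i j) = 1 := by exact_mod_cast h
    rw [← h']
    refine Finset.sum_congr rfl fun j _ => ?_
    rw [Real.rpow_two, Complex.sq_norm]
  rw [Finset.sum_congr rfl fun i _ => hrow i]
  simp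


lemma trace_kron_one_mul {du db : ℕ} (X : Matrix (Fin du) (Fin du) ℂ)
    (M : Matrix (Fin du × Fin db) (Fin du × Fin db) ℂ) :
    ((X ⊗ₖ (1 : Matrix (Fin db) (Fin db) ℂ)) * M).trace = (X * ptraceB M).trace := by
  simp only [Matrix.trace, Matrix.diag_apply, Matrix.mul_apply, Fintype.sum_prod_type,
    Matrix.kroneckerMap_apply, Matrix.one_apply, mul_ite, mul_one, mul_zero, ite_mul, zero_mul,
    ptraceB, Matrix.of_apply, Finset.mul_sum, Finset.sum_ite_eq, Finset.mem_univ, if_true]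
  exact Finset.sum_congr rfl fun i _ => Finset.sum_comm

lemma ptraceB_kron {du db : ℕ} (X : Matrix (Fin du) (Fin du) ℂ)
    (Y : Matrix (Fin db) (Fin db) ℂ) : ptraceB (X ⊗ₖ Y) = Y.trace • X := by
  ext i j
  simp only [ptraceB, Matrix.trace, Matrix.of_apply, Matrix.kroneckerMap_apply,
    Matrix.smul_apply, Matrix.diag_apply, smul_eq_mul]
  rw [Finset.sum_mul]
  exact Finset.sum_congr rfl fun x _ => mul_comm _ _

lemma trace_ptraceB {du db : ℕ} (M : Matrix (Fin du × Fin db) (Fin du × Fin db) ℂ) :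
    (ptraceB M).trace = M.trace := by
  simp [ptraceB, Matrix.trace, Fintype.sum_prod_type]

lemma exp_unitary_conj {n : Type*} [Fintype n] [DecidableEq n]
    {U : Matrix n n ℂ} (hU : U ∈ Matrix.unitaryGroup n ℂ) (A : Matrix n n ℂ) :
    NormedSpace.exp (U * A * Uᴴ) = U * NormedSpace.exp A * Uᴴ := by
  obtain ⟨h1, h2⟩ := Unitary.mem_iff.mp hU
  rw [Matrix.star_eq_conjTranspose] at h1 h2
  have hinv : U⁻¹ = Uᴴ := Matrix.inv_eq_left_inv h1
  rw [← hinv]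
  letI : Invertible U := ⟨Uᴴ, h1, h2⟩
  exact Matrix.exp_conj U A (isUnit_of_invertible U)

lemma trace_unitary_conj_s11 {n : Type*} [Fintype n] [DecidableEq n]
    {U : Matrix n n ℂ} (hU : U ∈ Matrix.unitaryGroup n ℂ) (A : Matrix n n ℂ) :
    (U * A * Uᴴ).trace = A.trace := by
  obtain ⟨h1, _⟩ := Unitary.mem_iff.mp hU
  rw [Matrix.star_eq_conjTranspose] at h1
  rw [Matrix.trace_mul_cycle, h1, Matrix.one_mul]

end Helpers

set_option maxHeartbeats 1000000 in
/-- Kelvin–Planck second law: if a mixture of unitaries applied to a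
subsystem together with a thermal bath is cyclic for the subsystem (the reduced final state
equals the initial state), then no positive work can be extracted. -/
theorem no_work_from_cyclic_process
    {du db : ℕ} {Ω : Type*} [MeasurableSpace Ω] (μ : Measure Ω) [IsProbabilityMeasure μ]
    (Hu : Matrix (Fin du) (Fin du) ℂ) (hHu : Hu.IsHermitian)
    (Hb : Matrix (Fin db) (Fin db) ℂ) (hHb : Hb.IsHermitian)
    (T : ℝ) (hT : 0 < T)
    (ρu : Matrix (Fin du) (Fin du) ℂ) (hρu : IsDensityMatrix ρu)
    (gb : Matrix (Fin db) (Fin db) ℂ)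
    (hgb : gb = ((NormedSpace.exp ((-(1 / T : ℂ)) • Hb)).trace)⁻¹ •
                NormedSpace.exp ((-(1 / T : ℂ)) • Hb))
    (U : Ω → Matrix (Fin du × Fin db) (Fin du × Fin db) ℂ)
    (hU : ∀ ω, U ω ∈ Matrix.unitaryGroup (Fin du × Fin db) ℂ)
    (hUmeas : AEStronglyMeasurable U μ)
    (σ : Matrix (Fin du × Fin db) (Fin du × Fin db) ℂ)
    (hσ : σ = ∫ ω, U ω * (ρu ⊗ₖ gb) * (U ω)ᴴ ∂μ)
    (hcyclic : ptraceB σ = ρu)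
    (W : ℝ)
    (hW : W = (((Hu ⊗ₖ (1 : Matrix (Fin db) (Fin db) ℂ) +
        (1 : Matrix (Fin du) (Fin du) ℂ) ⊗ₖ Hb) * (ρu ⊗ₖ gb - σ)).trace).re) :
    W ≤ 0 := by
  -- nonemptiness of the index types
  have hdune : Nonempty (Fin du) := by
    rcases Nat.eq_zero_or_pos du with h | h
    · exfalso; subst h
      have h2 := hρu.2
      rw [Matrix.trace] at h2
      simp at h2
    · exact ⟨⟨0, h⟩⟩
  have hdbne : Nonempty (Fin db) := by
    rcases Nat.eq_zero_or_pos db with h | h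
    · exfalso; subst h
      have h2 := hρu.2
      rw [← hcyclic, Matrix.trace] at h2
      simp [ptraceB] at h2
    · exact ⟨⟨0, h⟩⟩
  -- spectral data for ρu
  have hermρ : ρu.IsHermitian := hρu.1.1
  set V : Matrix (Fin du) (Fin du) ℂ := (hermρ.eigenvectorUnitary : Matrix (Fin du) (Fin du) ℂ) with hVdef
  have hV : V ∈ Matrix.unitaryGroup (Fin du) ℂ := (hermρ.eigenvectorUnitary).2
  set r : Fin du → ℝ := hermρ.eigenvalues with hrdef
  have hr0 : ∀ i, 0 ≤ r i := fun i => hρu.1.eigenvalues_nonneg i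
  have hρspec : ρu = V * Matrix.diagonal (fun i => (r i : ℂ)) * Vᴴ := by
    have h := hermρ.spectral_theorem
    rw [Unitary.conjStarAlgAut_apply, Matrix.star_eq_conjTranspose] at h
    exact h
  -- spectral data for Hb
  set Wb : Matrix (Fin db) (Fin db) ℂ := (hHb.eigenvectorUnitary : Matrix (Fin db) (Fin db) ℂ) with hWdef
  have hWb : Wb ∈ Matrix.unitaryGroup (Fin db) ℂ := (hHb.eigenvectorUnitary).2
  set hb : Fin db → ℝ := hHb.eigenvalues with hhbdef
  have hHbspec : Hb = Wb * Matrix.diagonal (fun k => (hb k : ℂ)) * Wbᴴ := by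
    have h := hHb.spectral_theorem
    rw [Unitary.conjStarAlgAut_apply, Matrix.star_eq_conjTranspose] at h
    exact h
  -- Gibbs state data
  set Z : ℝ := ∑ k, Real.exp (-(1 / T) * hb k) with hZdef
  have hZpos : 0 < Z := Finset.sum_pos (fun k _ => Real.exp_pos _) Finset.univ_nonempty
  set γ : Fin db → ℝ := fun k => Real.exp (-(1 / T) * hb k) / Z with hγdef
  have hγpos : ∀ k, 0 < γ k := fun k => div_pos (Real.exp_pos _) hZpos
  have hexp : NormedSpace.exp ((-(1 / T : ℂ)) • Hb) =
      Wb * Matrix.diagonal (fun k => (Real.exp (-(1 / T) * hb k) : ℂ)) * Wbᴴ := by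
    have h1 : (-(1 / T : ℂ)) • Hb =
        Wb * Matrix.diagonal (fun k => ((-(1 / T) * hb k : ℝ) : ℂ)) * Wbᴴ := by
      rw [hHbspec, ← Matrix.smul_mul, ← Matrix.mul_smul]
      congr 2
      ext i j
      simp only [Matrix.smul_apply, Matrix.diagonal_apply, smul_eq_mul, mul_ite, mul_zero]
      split_ifs
      · push_cast; ring
      · rfl
    rw [h1, exp_unitary_conj hWb, Matrix.exp_diagonal]
    have h2 : (NormedSpace.exp fun k => ((-(1 / T) * hb k : ℝ) : ℂ)) =
        fun k => (Real.exp (-(1 / T) * hb k) : ℂ) := by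
      funext k
      rw [Pi.coe_exp, ← Complex.exp_eq_exp_ℂ, ← Complex.ofReal_exp]
    rw [h2]
  have htrexp : (NormedSpace.exp ((-(1 / T : ℂ)) • Hb)).trace = (Z : ℂ) := by
    rw [hexp, trace_unitary_conj_s11 hWb, Matrix.trace_diagonal, hZdef]
    push_cast
    rfl
  have hgb2 : gb = Wb * Matrix.diagonal (fun k => (γ k : ℂ)) * Wbᴴ := by
    rw [hgb, htrexp, hexp, ← Matrix.smul_mul, ← Matrix.mul_smul]
    congr 2
    ext i j
    simp only [Matrix.smul_apply, Matrix.diagonal_apply, smul_eq_mul, mul_ite, mul_zero]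
    split_ifs
    · rw [hγdef]; push_cast; ring
    · rfl
  have htrg : gb.trace = 1 := by
    rw [hgb2, trace_unitary_conj_s11 hWb, Matrix.trace_diagonal]
    rw [show ∑ k, (γ k : ℂ) = ((∑ k, γ k : ℝ) : ℂ) by push_cast; rfl]
    rw [hγdef]
    norm_cast
    rw [← Finset.sum_div, ← hZdef, div_self (ne_of_gt hZpos)]
  -- unitary identities
  obtain ⟨hV1, hV2⟩ := Unitary.mem_iff.mp hV
  rw [Matrix.star_eq_conjTranspose] at hV1 hV2
  obtain ⟨hW1, hW2⟩ := Unitary.mem_iff.mp hWb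
  rw [Matrix.star_eq_conjTranspose] at hW1 hW2
  -- joint eigenbasis
  set 𝒰 : Matrix (Fin du × Fin db) (Fin du × Fin db) ℂ := V ⊗ₖ Wb with h𝒰def
  have h𝒰 : 𝒰 ∈ Matrix.unitaryGroup (Fin du × Fin db) ℂ := kron_unitary hV hWb
  obtain ⟨h𝒰1, h𝒰2⟩ := Unitary.mem_iff.mp h𝒰
  rw [Matrix.star_eq_conjTranspose] at h𝒰1 h𝒰2
  set t : Fin du × Fin db → ℝ := fun α => r α.1 * γ α.2 with htdef
  set τ : Matrix (Fin du × Fin db) (Fin du × Fin db) ℂ := ρu ⊗ₖ gb with hτdef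
  have hτspec : τ = 𝒰 * Matrix.diagonal (fun α => (t α : ℂ)) * 𝒰ᴴ := by
    rw [hτdef, hρspec, hgb2, h𝒰def, Matrix.mul_kronecker_mul, Matrix.mul_kronecker_mul,
      Matrix.diagonal_kronecker_diagonal, ← kron_conjTranspose]
    congr 2
    funext α
    rw [htdef]
    push_cast
    rfl
  -- the shift constant c
  have hne : (Finset.univ : Finset ((Fin du × Fin db) × Fin db)).Nonempty :=
    Finset.univ_nonempty
  set c : ℝ := (Finset.univ.inf' hne fun p : (Fin du × Fin db) × Fin db =>
      (if 0 < r p.1.1 then Real.log (r p.1.1) else 0) + Real.log (γ p.1.2) - Real.log (γ p.2)) - 1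
    with hcdef
  set a : Fin du × Fin db → ℝ :=
    fun α => (if 0 < r α.1 then Real.log (r α.1) else c) + Real.log (γ α.2) with hadef
  have hexp_a : ∀ α, 0 < r α.1 → Real.exp (a α) = t α := by
    intro α h
    rw [hadef]
    simp only [if_pos h]
    rw [Real.exp_add, Real.exp_log h, Real.exp_log (hγpos _)]
  have ht0 : ∀ α, 0 ≤ t α := fun α => mul_nonneg (hr0 _) (hγpos _).le
  have hpair : ∀ α β, t β * (a α - a β) ≤ t α - t β := by
    intro α β
    rcases (hr0 β.1).lt_or_eq with hβ | hβ
    · have htβ : t β = Real.exp (a β) := (hexp_a β hβ).symm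
      rcases (hr0 α.1).lt_or_eq with hα | hα
      · have htα : t α = Real.exp (a α) := (hexp_a α hα).symm
        rw [htα, htβ]
        have h3 := Real.add_one_le_exp (a α - a β)
        have h4 : Real.exp (a β) * Real.exp (a α - a β) = Real.exp (a α) := by
          rw [← Real.exp_add]
          congr 1
          ring
        nlinarith [Real.exp_pos (a β), Real.exp_pos (a α)]
      · have htα : t α = 0 := by rw [htdef]; simp [← hα]
        have hc1 : c ≤ (if 0 < r β.1 then Real.log (r β.1) else 0) + Real.log (γ β.2)
            - Real.log (γ α.2) - 1 := by
          rw [hcdef]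
          have h5 := Finset.inf'_le (b := (β, α.2))
            (fun p : (Fin du × Fin db) × Fin db =>
              (if 0 < r p.1.1 then Real.log (r p.1.1) else 0) + Real.log (γ p.1.2)
                - Real.log (γ p.2)) (Finset.mem_univ _)
          linarith [h5]
        have haα : a α = c + Real.log (γ α.2) := by rw [hadef]; simp [← hα]
        have haβ : a β = Real.log (r β.1) + Real.log (γ β.2) := by rw [hadef]; simp [hβ]
        rw [if_pos hβ] at hc1
        have h4 : a α ≤ a β - 1 := by rw [haα, haβ]; linarith
        have h6 : 0 < t β := by rw [htdef]; exact mul_pos hβ (hγpos _)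
        have h5 : t β * (a α - a β) ≤ t β * (-1) := by
          apply mul_le_mul_of_nonneg_left _ (ht0 β)
          linarith
        rw [htα]
        nlinarith
    · have htβ : t β = 0 := by rw [htdef]; simp [← hβ]
      rw [htβ]
      simpa using ht0 α
  -- the operators
  set A : Matrix (Fin du × Fin db) (Fin du × Fin db) ℂ :=
    𝒰 * Matrix.diagonal (fun α => (a α : ℂ)) * 𝒰ᴴ with hAdef
  set Fu : Matrix (Fin du) (Fin du) ℂ :=
    V * Matrix.diagonal (fun i => ((if 0 < r i then Real.log (r i) else c : ℝ) : ℂ)) * Vᴴ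
    with hFudef
  set G : Matrix (Fin db) (Fin db) ℂ :=
    Wb * Matrix.diagonal (fun k => ((Real.log (γ k) : ℝ) : ℂ)) * Wbᴴ with hGdef
  have hAeq : A = Fu ⊗ₖ (1 : Matrix (Fin db) (Fin db) ℂ)
      + (1 : Matrix (Fin du) (Fin du) ℂ) ⊗ₖ G := by
    have hds : Matrix.diagonal (fun α : Fin du × Fin db => (a α : ℂ)) =
        (Matrix.diagonal (fun i => ((if 0 < r i then Real.log (r i) else c : ℝ) : ℂ)))
          ⊗ₖ (1 : Matrix (Fin db) (Fin db) ℂ)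
        + (1 : Matrix (Fin du) (Fin du) ℂ)
          ⊗ₖ (Matrix.diagonal (fun k => ((Real.log (γ k) : ℝ) : ℂ))) := by
      rw [← Matrix.diagonal_one (n := Fin db), ← Matrix.diagonal_one (n := Fin du),
        Matrix.diagonal_kronecker_diagonal, Matrix.diagonal_kronecker_diagonal,
        Matrix.diagonal_add]
      apply congrArg Matrix.diagonal
      funext α
      rw [hadef]
      push_cast
      ring
    rw [hAdef, hds, Matrix.mul_add, Matrix.add_mul, h𝒰def, kron_conjTranspose,
      ← Matrix.mul_kronecker_mul, ← Matrix.mul_kronecker_mul,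
      ← Matrix.mul_kronecker_mul, ← Matrix.mul_kronecker_mul, Matrix.mul_one, Matrix.mul_one,
      hW2, hV2]
  have hGeq : G = ((-(1 / T) : ℝ) : ℂ) • Hb
      - ((Real.log Z : ℝ) : ℂ) • (1 : Matrix (Fin db) (Fin db) ℂ) := by
    have hdiag : Matrix.diagonal (fun k => ((Real.log (γ k) : ℝ) : ℂ)) =
        ((-(1 / T) : ℝ) : ℂ) • Matrix.diagonal (fun k => (hb k : ℂ))
        - ((Real.log Z : ℝ) : ℂ) • (1 : Matrix (Fin db) (Fin db) ℂ) := by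
      ext i j
      simp only [Matrix.sub_apply, Matrix.smul_apply, Matrix.diagonal_apply, Matrix.one_apply,
        smul_eq_mul, mul_ite, mul_zero, mul_one]
      split_ifs
      · rw [hγdef]
        rw [Real.log_div (Real.exp_ne_zero _) (ne_of_gt hZpos), Real.log_exp]
        push_cast
        ring
      · ring
    rw [hGdef, hdiag, Matrix.mul_sub, Matrix.sub_mul, Matrix.mul_smul, Matrix.smul_mul,
      Matrix.mul_smul, Matrix.smul_mul, Matrix.mul_one, hW2, ← hHbspec]
  have hHbG : Hb = (-(T : ℂ)) • G + ((-(T * Real.log Z) : ℝ) : ℂ) • 1 := by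
    rw [hGeq, smul_sub, smul_smul, smul_smul]
    have e1 : (-(T : ℂ)) * ((-(1 / T) : ℝ) : ℂ) = 1 := by
      push_cast
      field_simp
    have e2 : (-(T : ℂ)) * ((Real.log Z : ℝ) : ℂ) = -(((T * Real.log Z : ℝ)) : ℂ) := by
      push_cast
      ring
    rw [e1, e2, one_smul]
    push_cast
    module
  have hkron : (1 : Matrix (Fin du) (Fin du) ℂ) ⊗ₖ Hb =
      (-(T : ℂ)) • (A - Fu ⊗ₖ (1 : Matrix (Fin db) (Fin db) ℂ))
      + ((-(T * Real.log Z) : ℝ) : ℂ) • (1 : Matrix (Fin du × Fin db) (Fin du × Fin db) ℂ) := by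
    have h1G : (1 : Matrix (Fin du) (Fin du) ℂ) ⊗ₖ G
        = A - Fu ⊗ₖ (1 : Matrix (Fin db) (Fin db) ℂ) := by
      rw [hAeq]
      exact (add_sub_cancel_left _ _).symm
    rw [hHbG, Matrix.kronecker_add, Matrix.kronecker_smul, Matrix.kronecker_smul,
      Matrix.one_kronecker_one, h1G]
  -- traces
  have htrτ : τ.trace = 1 := by
    rw [hτdef, Matrix.trace_kronecker, htrg, hρu.2, one_mul]
  have htrσ : σ.trace = 1 := by
    rw [← trace_ptraceB σ, hcyclic, hρu.2]
  have hptτ : ptraceB τ = ρu := by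
    rw [hτdef, ptraceB_kron, htrg, one_smul]
  have hvan : ∀ X : Matrix (Fin du) (Fin du) ℂ,
      ((X ⊗ₖ (1 : Matrix (Fin db) (Fin db) ℂ)) * (τ - σ)).trace = 0 := by
    intro X
    rw [Matrix.mul_sub, Matrix.trace_sub, trace_kron_one_mul, trace_kron_one_mul, hptτ,
      hcyclic, sub_self]
  have htr1 : ((1 : Matrix (Fin du × Fin db) (Fin du × Fin db) ℂ) * (τ - σ)).trace = 0 := by
    rw [Matrix.one_mul, Matrix.trace_sub, htrτ, htrσ, sub_self]
  -- reduce W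
  have hW2 : W = (-(T : ℂ) * ((A * (τ - σ)).trace)).re := by
    rw [hW, Matrix.add_mul, Matrix.trace_add, hvan Hu, zero_add, hkron, Matrix.add_mul,
      Matrix.smul_mul, Matrix.smul_mul, Matrix.trace_add, Matrix.trace_smul, Matrix.trace_smul,
      htr1, Matrix.sub_mul, Matrix.trace_sub, hvan Fu, sub_zero]
    simp
  -- value of (A * τ).trace
  have hAτ : (A * τ).trace = ((∑ α, a α * t α : ℝ) : ℂ) := by
    have hmm : A * τ = 𝒰 * (Matrix.diagonal (fun α => (a α : ℂ))
        * Matrix.diagonal (fun α => (t α : ℂ))) * 𝒰ᴴ := by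
      rw [hAdef, hτspec]
      simp only [Matrix.mul_assoc]
      rw [show 𝒰ᴴ * (𝒰 * (Matrix.diagonal (fun α => (t α : ℂ)) * 𝒰ᴴ))
          = Matrix.diagonal (fun α => (t α : ℂ)) * 𝒰ᴴ by
        rw [← Matrix.mul_assoc, h𝒰1, Matrix.one_mul]]
    rw [hmm, trace_unitary_conj_s11 h𝒰, Matrix.diagonal_mul_diagonal, Matrix.trace_diagonal]
    push_cast
    rfl
  -- integral bound for (A * σ).trace.re
  have hσre : ((A * σ).trace).re ≤ ∑ α, a α * t α := by
    set F : Ω → Matrix (Fin du × Fin db) (Fin du × Fin db) ℂ :=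
      fun ω => U ω * τ * (U ω)ᴴ with hFdef
    have hFmeas : AEStronglyMeasurable F μ := by
      have hcont : Continuous fun M : Matrix (Fin du × Fin db) (Fin du × Fin db) ℂ =>
          M * τ * Mᴴ :=
        (continuous_id.matrix_mul continuous_const).matrix_mul
          continuous_id.matrix_conjTranspose
      exact hcont.comp_aestronglyMeasurable hUmeas
    have hFbdd : ∀ ω, ‖F ω‖ ≤ Real.sqrt (Fintype.card (Fin du × Fin db)) * ‖τ‖
        * Real.sqrt (Fintype.card (Fin du × Fin db)) := by
      intro ω
      calc ‖U ω * τ * (U ω)ᴴ‖ ≤ ‖U ω * τ‖ * ‖(U ω)ᴴ‖ := Matrix.frobenius_norm_mul _ _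
        _ ≤ ‖U ω‖ * ‖τ‖ * ‖(U ω)ᴴ‖ := by
            have := Matrix.frobenius_norm_mul (U ω) τ
            have hn : (0:ℝ) ≤ ‖(U ω)ᴴ‖ := norm_nonneg _
            nlinarith
        _ = Real.sqrt (Fintype.card (Fin du × Fin db)) * ‖τ‖
            * Real.sqrt (Fintype.card (Fin du × Fin db)) := by
            rw [Matrix.frobenius_norm_conjTranspose, unitary_frobenius_norm (hU ω)]
    have hFint : @Integrable (Matrix (Fin du × Fin db) (Fin du × Fin db) ℂ)
        PseudoMetricSpace.toUniformSpace.toTopologicalSpace _ Ω _ F μ :=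
      Integrable.mono' (integrable_const _) hFmeas (Filter.Eventually.of_forall hFbdd)
    set L : Matrix (Fin du × Fin db) (Fin du × Fin db) ℂ →ₗ[ℝ] ℝ :=
      { toFun := fun M => ((A * M).trace).re
        map_add' := by
          intro x y
          simp [Matrix.mul_add, Matrix.trace_add]
        map_smul' := by
          intro m x
          simp [Matrix.mul_smul, Matrix.trace_smul, Complex.real_smul, Complex.re_ofReal_mul] }
      with hLdef
    have hLσ : ((A * σ).trace).re = ∫ ω, ((A * F ω).trace).re ∂μ := by
      rw [hσ]
      calc ((A * (∫ ω, U ω * (ρu ⊗ₖ gb) * (U ω)ᴴ ∂μ)).trace).re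
          = (LinearMap.toContinuousLinearMap L) (∫ ω, F ω ∂μ) := rfl
        _ = ∫ ω, (LinearMap.toContinuousLinearMap L) (F ω) ∂μ :=
            ((LinearMap.toContinuousLinearMap L).integral_comp_comm hFint).symm
        _ = ∫ ω, ((A * F ω).trace).re ∂μ := rfl
    have hptw : ∀ ω, ((A * F ω).trace).re ≤ ∑ α, a α * t α := by
      intro ω
      have h9 : F ω = U ω * (𝒰 * Matrix.diagonal (fun α => (t α : ℂ)) * 𝒰ᴴ) * (U ω)ᴴ := by
        rw [hFdef, ← hτspec]
      rw [hAdef, h9]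
      exact pointwise_bound 𝒰 (U ω) h𝒰 (hU ω) a t hpair
    rw [hLσ]
    have hint2 : Integrable (fun ω => ((A * F ω).trace).re) μ :=
      (LinearMap.toContinuousLinearMap L).integrable_comp hFint
    calc ∫ ω, ((A * F ω).trace).re ∂μ ≤ ∫ _ω, (∑ α, a α * t α) ∂μ :=
          integral_mono hint2 (integrable_const _) hptw
      _ = ∑ α, a α * t α := by simp
  -- conclude
  have hfinal : (A * (τ - σ)).trace.re = (∑ α, a α * t α) - ((A * σ).trace).re := by
    rw [Matrix.mul_sub, Matrix.trace_sub, Complex.sub_re, hAτ, Complex.ofReal_re]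
  have hd : 0 ≤ (∑ α, a α * t α) - ((A * σ).trace).re := by linarith
  rw [hW2]
  have : (-(T : ℂ) * ((A * (τ - σ)).trace)).re = -T * ((A * (τ - σ)).trace).re := by
    rw [show -(T : ℂ) = ((-T : ℝ) : ℂ) by push_cast; ring, Complex.re_ofReal_mul]
  rw [this, hfinal]
  nlinarith
end
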